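/- arXiv:2206.01336 — 9 statements merged into one kernel-verified Lean document; each statement's English description precedes it below -/
import Mathlib

section
/- Let X be a geometric boundary for a group Γ, and suppose (c, C) and (c, C') are two B-cocycles over X with the same cocycle c. Then the continuous function C − C' is constant on X × X ∖ Δ. -/
open MeasureTheory

def IsHyperbolic {Γ X : Type*} [Group Γ] [TopologicalSpace X] [MulAction Γ X]
    (γ : Γ) (m p : X) : Prop :=
  m ≠ p ∧ γ • m = m ∧ γ • p = p ∧
  (∀ K : Set X, IsCompact K → m ∉ K → ∀ U : Set X, IsOpen U → p ∈ U →
    ∃ N : ℕ, ∀ n ≥ N, ∀ x ∈ K, (γ ^ n) • x ∈ U) ∧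
  (∀ K : Set X, IsCompact K → p ∉ K → ∀ V : Set X, IsOpen V → m ∈ V →
    ∃ N : ℕ, ∀ n ≥ N, ∀ x ∈ K, (γ⁻¹ ^ n) • x ∈ V)

structure IsGeometricBoundary (Γ X : Type*) [Group Γ] [TopologicalSpace X]
    [MeasurableSpace X] [MulAction Γ X] (pm pp : Γ → X) : Prop where
  compact : CompactSpace X
  t2 : T2Space X
  nontrivial : Nontrivial X
  contSMul : ContinuousConstSMul Γ X
  borel : BorelSpace X
  minimal : ∀ x : X, Dense (MulAction.orbit Γ x)
  hyp : ∀ γ : Γ, γ ≠ 1 → IsHyperbolic γ (pm γ) (pp γ)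
  measures : ∃ μ μ' : Measure X, μ ≠ 0 ∧ μ' ≠ 0 ∧
    IsFiniteMeasure μ ∧ IsFiniteMeasure μ' ∧
    (∀ γ : Γ, ∀ E : Set X, MeasurableSet E → (μ E = 0 ↔ μ ((γ • ·) ⁻¹' E) = 0)) ∧
    (∀ γ : Γ, ∀ E : Set X, MeasurableSet E → (μ' E = 0 ↔ μ' ((γ • ·) ⁻¹' E) = 0)) ∧
    (∀ S : Set (X × X), MeasurableSet S →
      (∀ γ : Γ, (fun q : X × X => (γ • q.1, γ • q.2)) ⁻¹' S = S) →
      μ.prod μ' S = 0 ∨ μ.prod μ' Sᶜ = 0)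

def IsCocycle {Γ X : Type*} [Group Γ] [MulAction Γ X] (c : Γ → X → ℝ) : Prop :=
  ∀ γ η : Γ, ∀ x : X, c (γ * η) x = c γ (η • x) + c η x

def IsBCocycle {Γ X : Type*} [Group Γ] [TopologicalSpace X] [MulAction Γ X]
    (c : Γ → X → ℝ) (C : X → X → ℝ) : Prop :=
  IsCocycle c ∧ (∀ γ : Γ, Continuous (c γ)) ∧
  ContinuousOn (fun q : X × X => C q.1 q.2) {q : X × X | q.1 ≠ q.2} ∧
  ∀ γ : Γ, ∀ x y : X, x ≠ y → C (γ • x) (γ • y) - C x y = c γ x + c γ y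

theorem stmt2 {Γ X : Type*} [Group Γ] [TopologicalSpace X] [MeasurableSpace X]
    [MulAction Γ X]
    (pm pp : Γ → X) (hgb : IsGeometricBoundary Γ X pm pp)
    (c : Γ → X → ℝ) (C C' : X → X → ℝ)
    (h1 : IsBCocycle c C) (h2 : IsBCocycle c C') :
    ∃ k : ℝ, ∀ x y : X, x ≠ y → C x y - C' x y = k := by
  haveI := hgb.t2
  -- the difference function
  set D : X × X → ℝ := fun q => C q.1 q.2 - C' q.1 q.2 with hD
  set S : Set (X × X) := {q : X × X | q.1 ≠ q.2} with hS
  have hDc : ContinuousOn D S := h1.2.2.1.sub h2.2.2.1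
  -- invariance of D
  have hinv : ∀ (η : Γ) (x y : X), x ≠ y → D (η • x, η • y) = D (x, y) := by
    intro η x y hxy
    have e1 := h1.2.2.2 η x y hxy
    have e2 := h2.2.2.2 η x y hxy
    simp only [hD]
    linarith
  -- Γ is nontrivial
  have hΓ : ∃ γ : Γ, γ ≠ 1 := by
    by_contra h
    push_neg at h
    obtain ⟨a, b, hab⟩ := hgb.nontrivial
    have horb : MulAction.orbit Γ a = {a} := by
      apply Set.eq_singleton_iff_unique_mem.mpr
      constructor
      · exact MulAction.mem_orbit_self a
      · rintro z ⟨γ, rfl⟩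
        simp [h γ]
    have := (hgb.minimal a).closure_eq
    rw [horb, isClosed_singleton.closure_eq] at this
    exact hab (by rw [show b = a from by have : b ∈ ({a} : Set X) := this ▸ Set.mem_univ b; exact this])
  obtain ⟨γ, hγ⟩ := hΓ
  obtain ⟨hmp, hm, hp, hattr, _⟩ := hgb.hyp γ hγ
  set m := pm γ with hm'
  set p := pp γ with hp'
  -- powers of γ fix m
  have hmfix : ∀ n : ℕ, (γ ^ n) • m = m := by
    intro n
    induction n with
    | zero => simp
    | succ k ih => rw [pow_succ, mul_smul, hm, ih]
  -- if x ≠ m then γ^n x ≠ m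
  have hmfixinv : ∀ n : ℕ, (γ ^ n)⁻¹ • m = m := by
    intro n
    conv_lhs => rw [← hmfix n]
    rw [inv_smul_smul]
  have hne : ∀ (x : X), x ≠ m → ∀ n : ℕ, (γ ^ n) • x ≠ m := by
    intro x hx n h
    apply hx
    have := congrArg (fun z => (γ ^ n)⁻¹ • z) h
    simpa [hmfixinv n] using this
  -- attraction: γ^n • x → p for x ≠ m
  have htend : ∀ (x : X), x ≠ m → Filter.Tendsto (fun n : ℕ => (γ ^ n) • x)
      Filter.atTop (nhds p) := by
    intro x hx
    rw [(nhds_basis_opens p).tendsto_right_iff]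
    rintro U ⟨hpU, hUopen⟩
    obtain ⟨N, hN⟩ := hattr {x} isCompact_singleton (by simpa using Ne.symm hx) U hUopen hpU
    exact Filter.eventually_atTop.mpr ⟨N, fun n hn => hN n hn x rfl⟩
  -- Claim B : D (x, m) = D (p, m) for x ≠ m
  have hB : ∀ x : X, x ≠ m → D (x, m) = D (p, m) := by
    intro x hx
    have hpmS : ((p, m) : X × X) ∈ S := hmp.symm
    have hcw : Filter.Tendsto D (nhdsWithin (p, m) S) (nhds (D (p, m))) :=
      (hDc.continuousWithinAt hpmS).tendsto
    have hseq : Filter.Tendsto (fun n : ℕ => (((γ ^ n) • x, m) : X × X))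
        Filter.atTop (nhdsWithin (p, m) S) := by
      rw [tendsto_nhdsWithin_iff]
      constructor
      · exact (htend x hx).prodMk_nhds tendsto_const_nhds
      · exact Filter.Eventually.of_forall fun n => hne x hx n
    have hconst : (fun n : ℕ => D ((γ ^ n) • x, m)) = fun _ => D (x, m) := by
      funext n
      have := hinv (γ ^ n) x m hx
      rw [hmfix n] at this
      exact this
    have := hcw.comp hseq
    rw [show (D ∘ fun n : ℕ => (((γ ^ n) • x, m) : X × X)) = fun _ => D (x, m) from hconst] at this
    exact tendsto_nhds_unique tendsto_const_nhds this
  -- Claim A : D (u, v) = D (p, m) for v in the orbit of m, u ≠ v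
  have hA : ∀ u v : X, v ∈ MulAction.orbit Γ m → u ≠ v → D (u, v) = D (p, m) := by
    rintro u v ⟨η, rfl⟩ huv
    have h' : η⁻¹ • u ≠ m := by
      intro h
      apply huv
      have := congrArg (fun z => η • z) h
      simpa using this
    have := hinv η (η⁻¹ • u) m h'
    rw [smul_inv_smul] at this
    rw [this]
    exact hB _ h'
  -- final step
  refine ⟨D (p, m), fun x y hxy => ?_⟩
  set T : Set X := {v | v ∈ MulAction.orbit Γ m ∧ x ≠ v} with hT
  have hyT : y ∈ closure T := by
    rw [mem_closure_iff]
    intro O hO hyO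
    have hO' : IsOpen (O ∩ {x}ᶜ) := hO.inter isOpen_compl_singleton
    have hyO' : y ∈ O ∩ {x}ᶜ := ⟨hyO, by simpa using hxy.symm⟩
    obtain ⟨z, hz1, hz2⟩ := (hgb.minimal m).exists_mem_open hO' ⟨y, hyO'⟩
    exact ⟨z, hz2.1, hz1, fun h => hz2.2 (by simp [h])⟩
  have hL : (nhdsWithin y T).NeBot := mem_closure_iff_nhdsWithin_neBot.mp hyT
  set g : X → ℝ := fun v => D (x, v) with hg
  have hgk : Filter.Tendsto g (nhdsWithin y T) (nhds (D (p, m))) := by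
    apply Filter.Tendsto.congr' _ tendsto_const_nhds
    filter_upwards [eventually_mem_nhdsWithin] with v hv
    exact (hA x v hv.1 hv.2).symm
  have hgxy : Filter.Tendsto g (nhdsWithin y T) (nhds (D (x, y))) := by
    have hcw : ContinuousWithinAt D S (x, y) := hDc.continuousWithinAt hxy
    have he : ContinuousWithinAt (fun v : X => ((x, v) : X × X)) T y :=
      (continuous_const.prodMk continuous_id).continuousWithinAt
    have hmap : Set.MapsTo (fun v : X => ((x, v) : X × X)) T S := fun v hv => hv.2
    exact (hcw.comp he hmap).tendsto
  exact tendsto_nhds_unique hgxy hgk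
end

section
/- Let X be a geometric boundary for a group Γ, let γ ∈ Γ ∖ {e} with attracting fixed point γ⁺ and repelling fixed point γ⁻, and let η ∈ Γ. Then ηγⁿ = e for at most one n ∈ ℤ, so ηγⁿ acts as a hyperbolic homeomorphism for all but at most one n. Moreover, if ηγ⁺ ≠ γ⁻, then as n → +∞ the attracting fixed points (ηγⁿ)⁺ converge to ηγ⁺ and the repelling fixed points (ηγⁿ)⁻ converge to γ⁻; that is, for every open neighborhood U of ηγ⁺ and every open neighborhood V of γ⁻ there is N such that for all n ≥ N with ηγⁿ ≠ e one has (ηγⁿ)⁺ ∈ U and (ηγⁿ)⁻ ∈ V. -/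
open MeasureTheory

/-- A geometric boundary has at least three points. -/
lemma gb_three_points {Γ X : Type*} [Group Γ] [TopologicalSpace X] [MeasurableSpace X]
    [MulAction Γ X] (pm pp : Γ → X) (hgb : IsGeometricBoundary Γ X pm pp)
    (a b : X) : ∃ c : X, c ≠ a ∧ c ≠ b := by
  haveI := hgb.t2
  haveI := hgb.nontrivial
  by_contra h
  push_neg at h
  -- every point is a or b
  have hall : ∀ c : X, c = a ∨ c = b := by
    intro c
    by_cases hc : c = a
    · exact Or.inl hc
    · exact Or.inr (h c hc)
  have hab : a ≠ b := by
    intro hab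
    obtain ⟨x, y, hxy⟩ := exists_pair_ne X
    rcases hall x with hx | hx <;> rcases hall y with hy | hy <;>
      simp_all
  -- the orbit of a is dense, hence hits b
  have hb : b ∈ MulAction.orbit Γ a := by
    by_contra hbnot
    have horb : MulAction.orbit Γ a = {a} := by
      ext z
      constructor
      · intro hz
        rcases hall z with hz' | hz'
        · simpa using hz'
        · exact absurd (hz' ▸ hz) hbnot
      · intro hz
        simp only [Set.mem_singleton_iff] at hz
        subst hz
        exact MulAction.mem_orbit_self z
    have := hgb.minimal a
    rw [horb] at this
    have : b ∈ closure ({a} : Set X) := this.closure_eq ▸ Set.mem_univ b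
    rw [isClosed_singleton.closure_eq] at this
    exact hab (this.symm)
  obtain ⟨δ, hδ0⟩ := hb
  have hδ : δ • a = b := hδ0
  have hδ1 : δ ≠ 1 := by
    intro h1
    rw [h1, one_smul] at hδ
    exact hab hδ
  obtain ⟨hne, hfm, hfp, -, -⟩ := hgb.hyp δ hδ1
  -- pm δ and pp δ are distinct, both among {a, b}, so δ fixes a and b
  have hfa : δ • a = a := by
    rcases hall (pm δ) with h1 | h1 <;> rcases hall (pp δ) with h2 | h2
    · exact absurd (h1.trans h2.symm) hne
    · exact h1 ▸ hfm
    · exact h2 ▸ hfp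
    · exact absurd (h1.trans h2.symm) hne
  rw [hδ] at hfa
  exact hab hfa.symm

/-- Nontrivial elements of the group of a geometric boundary have infinite order. -/
lemma gb_no_torsion {Γ X : Type*} [Group Γ] [TopologicalSpace X] [MeasurableSpace X]
    [MulAction Γ X] (pm pp : Γ → X) (hgb : IsGeometricBoundary Γ X pm pp)
    (γ : Γ) (hγ : γ ≠ 1) (m : ℕ) (hm : m ≠ 0) (h : γ ^ m = 1) : False := by
  haveI := hgb.compact
  haveI := hgb.t2
  obtain ⟨hne, -, -, -, hrep⟩ := hgb.hyp γ hγ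
  have key : ∀ x : X, x ≠ pp γ → x = pm γ := by
    intro x hx
    by_contra hxm
    obtain ⟨N, hN⟩ := hrep {x} isCompact_singleton
      (by simp [Ne.symm hx]) ({x}ᶜ) isClosed_singleton.isOpen_compl
      (by simp [Ne.symm hxm])
    have hle : N ≤ m * (N + 1) := by
      have h1 : 1 ≤ m := Nat.one_le_iff_ne_zero.2 hm
      calc N ≤ N + 1 := Nat.le_succ N
        _ = 1 * (N + 1) := (one_mul _).symm
        _ ≤ m * (N + 1) := Nat.mul_le_mul_right _ h1
    have := hN (m * (N + 1)) hle x rfl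
    have h1 : (γ⁻¹) ^ (m * (N + 1)) = 1 := by
      rw [pow_mul, inv_pow, h, inv_one, one_pow]
    rw [h1, one_smul] at this
    exact this rfl
  obtain ⟨c, hc1, hc2⟩ := gb_three_points pm pp hgb (pm γ) (pp γ)
  exact hc1 (key c hc2)

theorem stmt7 {Γ X : Type*} [Group Γ] [TopologicalSpace X] [MeasurableSpace X]
    [MulAction Γ X]
    (pm pp : Γ → X) (hgb : IsGeometricBoundary Γ X pm pp)
    (γ η : Γ) (hγ : γ ≠ 1) :
    (∀ n k : ℤ, η * γ ^ n = 1 → η * γ ^ k = 1 → n = k) ∧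
    (∀ n : ℤ, η * γ ^ n ≠ 1 →
      IsHyperbolic (η * γ ^ n) (pm (η * γ ^ n)) (pp (η * γ ^ n))) ∧
    (η • pp γ ≠ pm γ →
      ∀ U V : Set X, IsOpen U → η • pp γ ∈ U → IsOpen V → pm γ ∈ V →
        ∃ N : ℤ, ∀ n : ℤ, N ≤ n → η * γ ^ n ≠ 1 →
          pp (η * γ ^ n) ∈ U ∧ pm (η * γ ^ n) ∈ V) := by
  haveI := hgb.compact
  haveI := hgb.t2
  haveI := hgb.contSMul
  refine ⟨?_, fun n hn => hgb.hyp _ hn, ?_⟩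
  · -- injectivity of n ↦ η γⁿ
    intro n k hn hk
    by_contra hne
    have h1 : γ ^ n = γ ^ k := mul_left_cancel (hn.trans hk.symm)
    have h2 : γ ^ (n - k) = 1 := by
      rw [zpow_sub, h1]
      group
    have h3 : γ ^ ((n - k).natAbs) = 1 := by
      rcases Int.natAbs_eq (n - k) with he | he
      · rw [← zpow_natCast, ← he, h2]
      · have he' : (((n - k).natAbs : ℤ)) = -(n - k) := by omega
        rw [← zpow_natCast, he', zpow_neg, h2, inv_one]
    exact gb_no_torsion pm pp hgb γ hγ _
      (Int.natAbs_ne_zero.2 (sub_ne_zero.2 hne)) h3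
  · -- convergence of fixed points
    intro hne U V hU hpU hV hmV
    obtain ⟨S, T, hS, hT, hpS, hmT, hST⟩ := t2_separation hne
    set U₁ : Set X := U ∩ S with hU₁def
    set V₁ : Set X := V ∩ T with hV₁def
    have hU₁ : IsOpen U₁ := hU.inter hS
    have hV₁ : IsOpen V₁ := hV.inter hT
    have hpU₁ : η • pp γ ∈ U₁ := ⟨hpU, hpS⟩
    have hmV₁ : pm γ ∈ V₁ := ⟨hmV, hmT⟩
    have hdisj : ∀ x : X, x ∈ U₁ → x ∈ V₁ → False := by
      intro x hx hy
      exact hST.le_bot ⟨hx.2, hy.2⟩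
    obtain ⟨-, -, -, hγatt, hγrep⟩ := hgb.hyp γ hγ
    have hcont : Continuous (fun x : X => η • x) := continuous_const_smul η
    -- (A): eventually η γⁿ maps the complement of V₁ into U₁
    obtain ⟨N₁, hN₁⟩ := hγatt V₁ᶜ hV₁.isClosed_compl.isCompact
      (by simp [hmV₁]) ((fun x : X => η • x) ⁻¹' U₁) (hU₁.preimage hcont)
      (by simpa using hpU₁)
    -- (B): eventually (η γⁿ)⁻¹ maps the complement of U₁ into V₁
    have hppK : pp γ ∉ (fun x : X => η⁻¹ • x) '' U₁ᶜ := by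
      rintro ⟨x, hx, hxe⟩
      apply hx
      have : x = η • pp γ := by rw [← hxe, smul_inv_smul]
      rw [this]
      exact hpU₁
    obtain ⟨N₂, hN₂⟩ := hγrep ((fun x : X => η⁻¹ • x) '' U₁ᶜ)
      (hU₁.isClosed_compl.isCompact.image (continuous_const_smul η⁻¹))
      hppK V₁ hV₁ hmV₁
    refine ⟨(N₁ : ℤ) + (N₂ : ℤ), fun n hn hgn1 => ?_⟩
    have hn1 : N₁ ≤ n.toNat := by omega
    have hn2 : N₂ ≤ n.toNat := by omega
    have hzn : γ ^ n = γ ^ n.toNat := by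
      rw [← zpow_natCast]
      congr 1
      omega
    set g : Γ := η * γ ^ n with hg
    obtain ⟨hab, hga, hgb', hatt, hrep⟩ := hgb.hyp g hgn1
    set a : X := pm g with ha
    set b : X := pp g with hb
    have HA : ∀ x : X, x ∉ V₁ → g • x ∈ U₁ := by
      intro x hx
      have h1 := hN₁ n.toNat hn1 x hx
      have h2 : η • (γ ^ n.toNat) • x ∈ U₁ := h1
      rw [hg, mul_smul, hzn]
      exact h2
    have HB : ∀ x : X, x ∉ U₁ → g⁻¹ • x ∈ V₁ := by
      intro x hx
      have hy : η⁻¹ • x ∈ (fun x : X => η⁻¹ • x) '' U₁ᶜ := ⟨x, hx, rfl⟩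
      have h1 := hN₂ n.toNat hn2 _ hy
      have heq : g⁻¹ • x = (γ⁻¹) ^ n.toNat • (η⁻¹ • x) := by
        rw [hg, mul_inv_rev, mul_smul, hzn, inv_pow]
      rw [heq]
      exact h1
    have HAk : ∀ k : ℕ, ∀ x : X, x ∉ V₁ → g ^ (k + 1) • x ∈ U₁ := by
      intro k
      induction k with
      | zero => intro x hx; simpa using HA x hx
      | succ k ih =>
        intro x hx
        have h1 := ih x hx
        have h2 : g ^ (k + 1) • x ∉ V₁ := fun hm => hdisj _ h1 hm
        have h3 := HA _ h2
        rw [← mul_smul] at h3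
        have : g * g ^ (k + 1) = g ^ (k + 1 + 1) := (pow_succ' g (k + 1)).symm
        rwa [this] at h3
    have HBk : ∀ k : ℕ, ∀ x : X, x ∉ U₁ → (g⁻¹) ^ (k + 1) • x ∈ V₁ := by
      intro k
      induction k with
      | zero => intro x hx; simpa using HB x hx
      | succ k ih =>
        intro x hx
        have h1 := ih x hx
        have h2 : (g⁻¹) ^ (k + 1) • x ∉ U₁ := fun hm => hdisj _ hm h1
        have h3 := HB _ h2
        rw [← mul_smul] at h3
        have : g⁻¹ * (g⁻¹) ^ (k + 1) = (g⁻¹) ^ (k + 1 + 1) := (pow_succ' g⁻¹ (k + 1)).symm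
        rwa [this] at h3
    -- every fixed point of g lies in U₁ ∪ V₁
    have haUV : a ∈ U₁ ∨ a ∈ V₁ := by
      by_cases hc : a ∈ V₁
      · exact Or.inr hc
      · left
        have := HA a hc
        rwa [hga] at this
    have hbUV : b ∈ U₁ ∨ b ∈ V₁ := by
      by_cases hc : b ∈ V₁
      · exact Or.inr hc
      · left
        have := HA b hc
        rwa [hgb'] at this
    -- the attracting fixed point is not in V₁
    have hbV : b ∉ V₁ := by
      intro hbV1
      by_cases hap : a = η • pp γ
      · obtain ⟨c, hca, hcb⟩ := gb_three_points pm pp hgb a b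
        by_cases hcV : c ∈ V₁
        · -- use repelling dynamics at a
          have hcU : c ∉ U₁ := fun hc => hdisj c hc hcV
          have haU1 : a ∈ U₁ := by rw [hap]; exact hpU₁
          obtain ⟨M, hM⟩ := hrep {c} isCompact_singleton
            (by simp [Ne.symm hcb]) U₁ hU₁ haU1
          exact hdisj _ (hM (M + 1) (Nat.le_succ M) c rfl) (HBk M c hcU)
        · -- use attracting dynamics at b
          obtain ⟨M, hM⟩ := hatt {c} isCompact_singleton
            (by simp [Ne.symm hca]) V₁ hV₁ hbV1
          exact hdisj _ (HAk M c hcV) (hM (M + 1) (Nat.le_succ M) c rfl)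
      · have hpV : η • pp γ ∉ V₁ := fun hc => hdisj _ hpU₁ hc
        obtain ⟨M, hM⟩ := hatt {η • pp γ} isCompact_singleton
          (by simp [hap]) V₁ hV₁ hbV1
        exact hdisj _ (HAk M _ hpV) (hM (M + 1) (Nat.le_succ M) _ rfl)
    have hbU : b ∈ U₁ := hbUV.resolve_right hbV
    -- the repelling fixed point is not in U₁
    have haU : a ∉ U₁ := by
      intro haU1
      have hmb : b ≠ pm γ := by
        intro hh
        exact hdisj _ (hh ▸ hbU) hmV₁
      have hmU : pm γ ∉ U₁ := fun hc => hdisj _ hc hmV₁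
      obtain ⟨M, hM⟩ := hrep {pm γ} isCompact_singleton
        (by simp [hmb]) U₁ hU₁ haU1
      exact hdisj _ (hM (M + 1) (Nat.le_succ M) _ rfl) (HBk M _ hmU)
    have haV : a ∈ V₁ := haUV.resolve_left haU
    exact ⟨hbU.1, haV.1⟩
end

section
/- Let X be a geometric boundary for a group Γ and let (δ, f) be a B-cocycle such that δ(γ, γ⁺) = 0 for every γ ∈ Γ ∖ {e} (where γ⁺ is the attracting fixed point of γ). Then for every γ ∈ Γ ∖ {e} with fixed points γ⁺, γ⁻ and every η ∈ Γ with ηγ⁺ ≠ γ⁻ one has δ(η, γ⁺) = f(ηγ⁺, γ⁻) − f(γ⁺, γ⁻). -/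
open MeasureTheory

/-- If a hyperbolic homeomorphism maps a compact set with at least two points into
itself, then its attracting fixed point lies in that set. -/
lemma aux_pp_mem {Γ X : Type*} [Group Γ] [TopologicalSpace X] [T2Space X] [MulAction Γ X]
    {σ : Γ} {m p : X} (h : IsHyperbolic σ m p) {K : Set X} (hK : IsCompact K)
    {a b : X} (ha : a ∈ K) (hb : b ∈ K) (hab : a ≠ b)
    (hinv : ∀ x ∈ K, σ • x ∈ K) : p ∈ K := by
  obtain ⟨x, hxK, hxm⟩ : ∃ x ∈ K, x ≠ m := by
    by_cases hca : a = m
    · exact ⟨b, hb, fun hbm => hab (by rw [hca, hbm])⟩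
    · exact ⟨a, ha, hca⟩
  have hall : ∀ n : ℕ, (σ ^ n) • x ∈ K := by
    intro n
    induction n with
    | zero => simpa using hxK
    | succ k ih =>
        rw [pow_succ', mul_smul]
        exact hinv _ ih
  by_contra hpK
  obtain ⟨N, hN⟩ := h.2.2.2.1 {x} isCompact_singleton (by simpa using Ne.symm hxm)
    Kᶜ hK.isClosed.isOpen_compl hpK
  exact hN N le_rfl x (Set.mem_singleton x) (hall N)

theorem stmt9 {Γ X : Type*} [Group Γ] [TopologicalSpace X] [MeasurableSpace X]
    [MulAction Γ X]
    (pm pp : Γ → X) (hgb : IsGeometricBoundary Γ X pm pp)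
    (δ : Γ → X → ℝ) (f : X → X → ℝ) (hB : IsBCocycle δ f)
    (hℓ : ∀ γ : Γ, γ ≠ 1 → δ γ (pp γ) = 0) :
    ∀ γ : Γ, γ ≠ 1 → ∀ η : Γ, η • pp γ ≠ pm γ →
      δ η (pp γ) = f (η • pp γ) (pm γ) - f (pp γ) (pm γ) := by
  obtain ⟨hcoc, hδcont, hfcont, hrel⟩ := hB
  intro γ hγ η hηγ
  haveI := hgb.compact
  haveI := hgb.t2
  haveI := hgb.contSMul
  obtain ⟨hmp, hfm, hfp, hattr, hrep⟩ := hgb.hyp γ hγ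
  -- basic cocycle facts
  have h1 : ∀ x : X, δ 1 x = 0 := by
    intro x
    have h := hcoc 1 1 x
    rw [one_mul, one_smul] at h
    linarith
  have hδp : δ γ (pp γ) = 0 := hℓ γ hγ
  have hδm : δ γ (pm γ) = 0 := by
    have h := hrel γ (pp γ) (pm γ) hmp.symm
    rw [hfp, hfm, hδp] at h
    linarith
  have hfixp : ∀ n : ℕ, (γ ^ n) • (pp γ) = pp γ := by
    intro n
    induction n with
    | zero => simp
    | succ k ih => rw [pow_succ, mul_smul, hfp, ih]
  have hfixm : ∀ n : ℕ, (γ ^ n) • (pm γ) = pm γ := by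
    intro n
    induction n with
    | zero => simp
    | succ k ih => rw [pow_succ, mul_smul, hfm, ih]
  have hδpn : ∀ n : ℕ, δ (γ ^ n) (pp γ) = 0 := by
    intro n
    induction n with
    | zero => simpa using h1 (pp γ)
    | succ k ih =>
        have h := hcoc (γ ^ k) γ (pp γ)
        rw [← pow_succ, hfp, ih, hδp] at h
        linarith
  have hδmn : ∀ n : ℕ, δ (γ ^ n) (pm γ) = 0 := by
    intro n
    induction n with
    | zero => simpa using h1 (pm γ)
    | succ k ih =>
        have h := hcoc (γ ^ k) γ (pm γ)
        rw [← pow_succ, hfm, ih, hδm] at h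
        linarith
  by_cases hcase : ∃ n : ℕ, γ ^ n * η = 1
  · -- degenerate case : η is a (nonpositive) power of γ
    obtain ⟨n, hn⟩ := hcase
    have hη : η = (γ ^ n)⁻¹ := (inv_eq_of_mul_eq_one_right hn).symm
    have hηfix : η • pp γ = pp γ := by
      rw [hη, inv_smul_eq_iff]
      exact (hfixp n).symm
    have hδη : δ η (pp γ) = 0 := by
      have h := hcoc (γ ^ n)⁻¹ (γ ^ n) (pp γ)
      rw [inv_mul_cancel, hfixp n, hδpn n, h1 (pp γ)] at h
      rw [hη]
      linarith
    rw [hδη, hηfix]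
    ring
  · -- main case : γ ^ n * η ≠ 1 for all n
    push_neg at hcase
    -- γ⁺ is not an isolated point
    have hniso : ∀ V : Set X, IsOpen V → pp γ ∈ V → ∃ z ∈ V, z ≠ pp γ := by
      intro V hV hpV
      by_contra hcon
      push_neg at hcon
      have hclass : ∀ x : X, x ≠ pm γ → x = pp γ := by
        intro x hx
        obtain ⟨N, hN⟩ := hattr {x} isCompact_singleton (by simpa using Ne.symm hx) V hV hpV
        have hmem := hN N le_rfl x (Set.mem_singleton x)
        have hxe := hcon _ hmem
        have : (γ ^ N) • x = (γ ^ N) • pp γ := by rw [hxe, hfixp]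
        exact (smul_left_cancel_iff (γ ^ N)).mp this
      have hor : ∀ x : X, x = pm γ ∨ x = pp γ := fun x =>
        or_iff_not_imp_left.mpr (hclass x)
      have hopen : IsOpen {x : X | x ≠ pp γ} := isOpen_ne
      have hne : Set.Nonempty {x : X | x ≠ pp γ} := ⟨pm γ, hmp⟩
      obtain ⟨y, hy1, hy2⟩ := (hgb.minimal (pp γ)).exists_mem_open hopen hne
      obtain ⟨g, hg⟩ := MulAction.mem_orbit_iff.mp hy1
      have hgne : g ≠ 1 := by
        rintro rfl
        rw [one_smul] at hg
        exact hy2 hg.symm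
      obtain ⟨hmp', hfm', hfp', -, -⟩ := hgb.hyp g hgne
      have hgfix : g • pp γ = pp γ := by
        rcases hor (pp g) with h | h
        · have h2 : pm g = pp γ := by
            rcases hor (pm g) with h' | h'
            · exact absurd (h'.trans h.symm) hmp'
            · exact h'
          rw [← h2]
          exact hfm'
        · rw [← h]
          exact hfp'
      exact hy2 (hg.symm.trans hgfix)
    -- the auxiliary point
    set y₀ : X := η⁻¹ • pm γ with hy₀def
    have hy0 : η • y₀ = pm γ := smul_inv_smul η (pm γ)
    have hy0p : pp γ ≠ y₀ := by
      intro h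
      exact hηγ (by rw [h, hy0])
    -- attracting points of γ ^ n * η converge to pp γ
    have hT : Filter.Tendsto (fun n : ℕ => pp (γ ^ n * η)) Filter.atTop (nhds (pp γ)) := by
      rw [tendsto_nhds]
      intro U hU hpU
      have hU' : IsOpen (U ∩ {x : X | x ≠ y₀}) := hU.inter isOpen_ne
      have hpU' : pp γ ∈ U ∩ {x : X | x ≠ y₀} := ⟨hpU, hy0p⟩
      obtain ⟨K, hKc, hKi, hKU⟩ := exists_compact_subset hU' hpU'
      have hηK : IsCompact ((η • ·) '' K) := hKc.image (continuous_const_smul η)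
      have hmηK : pm γ ∉ (η • ·) '' K := by
        rintro ⟨k, hk, hke⟩
        have : k = y₀ := by
          rw [hy₀def, ← hke, inv_smul_smul]
        exact (hKU hk).2 this
      obtain ⟨N, hN⟩ := hattr _ hηK hmηK (interior K) isOpen_interior hKi
      filter_upwards [Filter.eventually_ge_atTop N] with n hn
      have hinv : ∀ x ∈ K, (γ ^ n * η) • x ∈ K := by
        intro x hx
        rw [mul_smul]
        exact interior_subset (hN n hn (η • x) ⟨x, hx, rfl⟩)
      obtain ⟨z, hzK, hzp⟩ := hniso (interior K) isOpen_interior hKi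
      exact (hKU (aux_pp_mem (hgb.hyp _ (hcase n)) hKc (interior_subset hKi)
        (interior_subset hzK) (Ne.symm hzp) hinv)).1
    -- eventual facts
    have hev1 : ∀ᶠ n : ℕ in Filter.atTop, pp (γ ^ n * η) ≠ y₀ :=
      hT.eventually (isOpen_ne.eventually_mem hy0p)
    have hev2 : ∀ᶠ n : ℕ in Filter.atTop, pp (γ ^ n * η) ≠ pm γ :=
      hT.eventually (isOpen_ne.eventually_mem hmp.symm)
    -- the eventual identity
    have hkey : ∀ᶠ n : ℕ in Filter.atTop,
        f (pp (γ ^ n * η)) (pm γ) - f (pp (γ ^ n * η)) y₀ = δ η y₀ := by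
      filter_upwards [hev1] with n hn1
      have hhyp := hgb.hyp (γ ^ n * η) (hcase n)
      have hr := hrel (γ ^ n * η) (pp (γ ^ n * η)) y₀ hn1
      rw [hhyp.2.2.1] at hr
      rw [show (γ ^ n * η) • y₀ = pm γ from by rw [mul_smul, hy0, hfixm n]] at hr
      have hδP : δ (γ ^ n * η) (pp (γ ^ n * η)) = 0 := hℓ _ (hcase n)
      have hδy : δ (γ ^ n * η) y₀ = δ η y₀ := by
        have h := hcoc (γ ^ n) η y₀
        rw [hy0, hδmn n] at h
        linarith
      rw [hδP, hδy] at hr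
      linarith
    -- pass to the limit using continuity of f off the diagonal
    have hc1 : Filter.Tendsto (fun n : ℕ => f (pp (γ ^ n * η)) (pm γ)) Filter.atTop
        (nhds (f (pp γ) (pm γ))) := by
      have h2 : Filter.Tendsto (fun n : ℕ => ((pp (γ ^ n * η) : X), pm γ)) Filter.atTop
          (nhdsWithin (pp γ, pm γ) {q : X × X | q.1 ≠ q.2}) := by
        rw [tendsto_nhdsWithin_iff]
        exact ⟨hT.prodMk_nhds tendsto_const_nhds, hev2⟩
      exact (hfcont (pp γ, pm γ) hmp.symm).tendsto.comp h2
    have hc2 : Filter.Tendsto (fun n : ℕ => f (pp (γ ^ n * η)) y₀) Filter.atTop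
        (nhds (f (pp γ) y₀)) := by
      have h2 : Filter.Tendsto (fun n : ℕ => ((pp (γ ^ n * η) : X), y₀)) Filter.atTop
          (nhdsWithin (pp γ, y₀) {q : X × X | q.1 ≠ q.2}) := by
        rw [tendsto_nhdsWithin_iff]
        exact ⟨hT.prodMk_nhds tendsto_const_nhds, hev1⟩
      exact (hfcont (pp γ, y₀) hy0p).tendsto.comp h2
    have hlim := hc1.sub hc2
    have hconst : Filter.Tendsto
        (fun n : ℕ => f (pp (γ ^ n * η)) (pm γ) - f (pp (γ ^ n * η)) y₀) Filter.atTop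
        (nhds (δ η y₀)) :=
      Filter.Tendsto.congr' (hkey.mono fun n h => h.symm) tendsto_const_nhds
    have hA : f (pp γ) (pm γ) - f (pp γ) y₀ = δ η y₀ := tendsto_nhds_unique hlim hconst
    have hB2 := hrel η (pp γ) y₀ hy0p
    rw [hy0] at hB2
    linarith
end

section
/- Let Γ be a nontrivial group, X a geometric boundary for Γ, and (δ, f) a B-cocycle such that δ(γ, γ⁺) = 0 for every γ ∈ Γ ∖ {e}. Then δ is bounded: there exists M ≥ 0 such that |δ(γ, x)| ≤ M for all γ ∈ Γ and all x ∈ X. -/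
open MeasureTheory

set_option linter.unusedSectionVars false

section Aux

variable {Γ X : Type*} [Group Γ] [TopologicalSpace X] [MulAction Γ X]

lemma cocycle_one {c : Γ → X → ℝ} (hc : IsCocycle c) (x : X) : c 1 x = 0 := by
  have h := hc 1 1 x
  rw [one_mul, one_smul] at h
  linarith

lemma cocycle_inv {c : Γ → X → ℝ} (hc : IsCocycle c) (γ : Γ) (x : X) :
    c γ⁻¹ (γ • x) = - c γ x := by
  have h := hc γ⁻¹ γ x
  rw [inv_mul_cancel, cocycle_one hc] at h
  linarith

lemma smul_pow_fixed {γ : Γ} {x : X} (h : γ • x = x) (n : ℕ) : γ ^ n • x = x := by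
  induction n with
  | zero => simp
  | succ n ih => rw [pow_succ, mul_smul, h, ih]

lemma conj_pow' (α γ : Γ) (n : ℕ) : (α * γ * α⁻¹) ^ n = α * γ ^ n * α⁻¹ := by
  induction n with
  | zero => simp
  | succ n ih => rw [pow_succ, ih, pow_succ]; group

lemma IsHyperbolic.inv {γ : Γ} {m p : X} (h : IsHyperbolic γ m p) :
    IsHyperbolic γ⁻¹ p m := by
  obtain ⟨hmp, hm, hp, hatt, hrep⟩ := h
  refine ⟨hmp.symm, ?_, ?_, ?_, ?_⟩
  · rw [inv_smul_eq_iff, hp]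
  · rw [inv_smul_eq_iff, hm]
  · exact hrep
  · simpa [inv_inv] using hatt

-- the off-diagonal set is open
lemma isOpen_offdiag [T2Space X] : IsOpen {q : X × X | q.1 ≠ q.2} := by
  have h := (isClosed_diagonal (X := X)).isOpen_compl
  have he : (Set.diagonal X)ᶜ = {q : X × X | q.1 ≠ q.2} := by
    ext q; simp [Set.diagonal, eq_comm]
  rwa [he] at h

end Aux
section Main

variable {Γ X : Type*} [Group Γ] [TopologicalSpace X] [MulAction Γ X]
  [T2Space X] [CompactSpace X] [ContinuousConstSMul Γ X]
  {pm pp : Γ → X} {δ : Γ → X → ℝ} {f : X → X → ℝ}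

/-- A fixed point other than `m` must be `p`. -/
lemma fixed_eq_pp {γ : Γ} {m p : X} (h : IsHyperbolic γ m p) {q : X}
    (hq : γ • q = q) (hqm : q ≠ m) : q = p := by
  by_contra hqp
  obtain ⟨U, V, hU, hV, hpU, hqV, hUV⟩ :=
    t2_separation (show p ≠ q from fun e => hqp e.symm)
  obtain ⟨N, hN⟩ := h.2.2.2.1 {q} isCompact_singleton
    (by simp [Ne.symm hqm]) U hU hpU
  have hqU := hN N le_rfl q rfl
  rw [smul_pow_fixed hq] at hqU
  exact Set.disjoint_left.mp hUV hqU hqV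

/-- There is a point distinct from both points of a hyperbolic pair. -/
lemma exists_third (hmin : ∀ x : X, Dense (MulAction.orbit Γ x))
    (hhyp : ∀ γ : Γ, γ ≠ 1 → IsHyperbolic γ (pm γ) (pp γ))
    {k : Γ} {m p : X} (h : IsHyperbolic k m p) :
    ∃ q : X, q ≠ m ∧ q ≠ p := by
  by_contra hcon
  push_neg at hcon
  have hall : ∀ q : X, q = m ∨ q = p := by
    intro q
    rcases eq_or_ne q m with e | e
    · exact Or.inl e
    · exact Or.inr (hcon q e)
  have hopen : IsOpen ({p} : Set X) := by
    have : ({p} : Set X) = {x | x ≠ m} := by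
      ext x
      constructor
      · rintro rfl; exact h.1.symm
      · intro hx; rcases hall x with e | e
        · exact absurd e hx
        · simp [e]
    rw [this]
    exact isOpen_ne
  obtain ⟨y, hyorb, hyU⟩ := (hmin m).exists_mem_open hopen ⟨p, rfl⟩
  obtain ⟨σ, hσ⟩ := MulAction.mem_orbit_iff.mp hyorb
  rw [Set.mem_singleton_iff] at hyU
  subst hyU
  have hσne : σ ≠ 1 := by
    intro e; rw [e, one_smul] at hσ; exact h.1 hσ
  have hσhyp := hhyp σ hσne
  have hfix : σ • m = m := by
    rcases hall (pm σ) with e1 | e1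
    · rw [← e1]; exact hσhyp.2.1
    · rcases hall (pp σ) with e2 | e2
      · rw [← e2]; exact hσhyp.2.2.1
      · exact absurd (e1.trans e2.symm) hσhyp.1
  rw [hσ] at hfix
  exact h.1 hfix.symm

/-- The hyperbolic fixed pair is unique. -/
lemma hyp_unique (hmin : ∀ x : X, Dense (MulAction.orbit Γ x))
    (hhyp : ∀ γ : Γ, γ ≠ 1 → IsHyperbolic γ (pm γ) (pp γ))
    {γ : Γ} {m p m' p' : X} (h : IsHyperbolic γ m p) (h' : IsHyperbolic γ m' p') :
    m' = m ∧ p' = p := by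
  obtain ⟨q, hqm, hqp⟩ := exists_third hmin hhyp h
  have hswap : ¬ IsHyperbolic γ p m := by
    intro hs
    obtain ⟨U, V, hU, hV, hpU, hmV, hUV⟩ := t2_separation (Ne.symm h.1)
    obtain ⟨N₁, hN₁⟩ := h.2.2.2.1 {q} isCompact_singleton (by simp [Ne.symm hqm]) U hU hpU
    obtain ⟨N₂, hN₂⟩ := hs.2.2.2.1 {q} isCompact_singleton (by simp [Ne.symm hqp]) V hV hmV
    have h1 := hN₁ (max N₁ N₂) (le_max_left _ _) q rfl
    have h2 := hN₂ (max N₁ N₂) (le_max_right _ _) q rfl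
    exact Set.disjoint_left.mp hUV h1 h2
  have hp' : p' = p := by
    rcases eq_or_ne p' m with e | e
    · exfalso
      have hm'p : m' = p := by
        have : m' ≠ m := by rw [← e]; exact h'.1
        exact fixed_eq_pp h h'.2.1 this
      rw [hm'p, e] at h'
      exact hswap h'
    · exact fixed_eq_pp h h'.2.2.1 e
  have hm' : m' = m := by
    rcases eq_or_ne m' m with e | e
    · exact e
    · exfalso
      have : m' = p := fixed_eq_pp h h'.2.1 e
      rw [this, hp'] at h'
      exact h'.1 rfl
  exact ⟨hm', hp'⟩

/-- Conjugation of the attraction clause. -/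
lemma att_conj {γ α : Γ} {m p : X}
    (hatt : ∀ K : Set X, IsCompact K → m ∉ K → ∀ U : Set X, IsOpen U → p ∈ U →
      ∃ N : ℕ, ∀ n ≥ N, ∀ x ∈ K, (γ ^ n) • x ∈ U) :
    ∀ K : Set X, IsCompact K → α • m ∉ K → ∀ U : Set X, IsOpen U → α • p ∈ U →
      ∃ N : ℕ, ∀ n ≥ N, ∀ x ∈ K, ((α * γ * α⁻¹) ^ n) • x ∈ U := by
  intro K hK hmK U hU hpU
  have hK' : IsCompact ((fun x => α⁻¹ • x) '' K) := hK.image (continuous_const_smul _)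
  have hmK' : m ∉ (fun x => α⁻¹ • x) '' K := by
    rintro ⟨x, hxK, hx⟩
    apply hmK
    have : α • m = x := by rw [← hx, smul_inv_smul]
    rwa [this]
  have hU' : IsOpen ((fun x => α • x) ⁻¹' U) := hU.preimage (continuous_const_smul _)
  have hpU' : p ∈ (fun x => α • x) ⁻¹' U := by
    simpa using hpU
  obtain ⟨N, hN⟩ := hatt _ hK' hmK' _ hU' hpU'
  refine ⟨N, fun n hn x hx => ?_⟩
  have hmem : α⁻¹ • x ∈ (fun x => α⁻¹ • x) '' K := ⟨x, hx, rfl⟩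
  have := hN n hn _ hmem
  have hrw : (α * γ * α⁻¹) ^ n • x = α • (γ ^ n • (α⁻¹ • x)) := by
    rw [conj_pow', mul_smul, mul_smul]
  rw [hrw]
  exact this

lemma IsHyperbolic.conj {γ : Γ} {m p : X} (h : IsHyperbolic γ m p) (α : Γ) :
    IsHyperbolic (α * γ * α⁻¹) (α • m) (α • p) := by
  obtain ⟨hmp, hm, hp, hatt, hrep⟩ := h
  refine ⟨fun e => hmp (smul_left_cancel α e), ?_, ?_, att_conj hatt, ?_⟩
  · rw [mul_smul, mul_smul, inv_smul_smul, hm]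
  · rw [mul_smul, mul_smul, inv_smul_smul, hp]
  · have := att_conj (α := α) (γ := γ⁻¹) (m := p) (p := m) hrep
    intro K hK hpK V hV hmV
    obtain ⟨N, hN⟩ := this K hK hpK V hV hmV
    refine ⟨N, fun n hn x hx => ?_⟩
    have hrw : (α * γ * α⁻¹)⁻¹ = α * γ⁻¹ * α⁻¹ := by group
    rw [hrw]
    exact hN n hn x hx

/-- Every nonempty open set contains two distinct points. -/
lemma open_two (hmin : ∀ x : X, Dense (MulAction.orbit Γ x))
    (hhyp : ∀ γ : Γ, γ ≠ 1 → IsHyperbolic γ (pm γ) (pp γ))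
    {γ₀ : Γ} (hγ₀ : γ₀ ≠ 1) {U : Set X} (hU : IsOpen U) (hne : U.Nonempty) :
    ∃ a b : X, a ∈ U ∧ b ∈ U ∧ a ≠ b := by
  obtain ⟨u, hu⟩ := hne
  by_contra hcon
  push_neg at hcon
  have hsingle : ∀ x ∈ U, x = u := fun x hx => hcon x u hx hu
  have h₀ := hhyp γ₀ hγ₀
  obtain ⟨q, hqm, hqp⟩ := exists_third hmin hhyp h₀
  obtain ⟨y, hyorb, hyU⟩ := (hmin (pp γ₀)).exists_mem_open hU ⟨u, hu⟩
  obtain ⟨σ, hσ⟩ := MulAction.mem_orbit_iff.mp hyorb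
  have hyu : y = u := hsingle y hyU
  have hW : IsOpen ((fun x => σ • x) ⁻¹' U) := hU.preimage (continuous_const_smul _)
  have hWeq : ((fun x => σ • x) ⁻¹' U) = {pp γ₀} := by
    ext x
    simp only [Set.mem_preimage, Set.mem_singleton_iff]
    constructor
    · intro hx
      have : σ • x = u := hsingle _ hx
      have : σ • x = σ • pp γ₀ := by rw [this, ← hyu, ← hσ]
      exact smul_left_cancel σ this
    · rintro rfl
      rw [hσ, hyu]; exact hu
  rw [hWeq] at hW
  obtain ⟨N, hN⟩ := h₀.2.2.2.1 {q} isCompact_singleton (by simp [Ne.symm hqm]) _ hW (rfl : pp γ₀ ∈ {pp γ₀})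
  have := hN N le_rfl q rfl
  rw [Set.mem_singleton_iff] at this
  apply hqp
  have hq' : (γ₀ ^ N)⁻¹ • ((γ₀ ^ N) • q) = (γ₀ ^ N)⁻¹ • pp γ₀ := by rw [this]
  rw [inv_smul_smul] at hq'
  rw [hq']
  rw [inv_smul_eq_iff]
  exact (smul_pow_fixed h₀.2.2.1 N).symm

end Main
section Main2

variable {Γ X : Type*} [Group Γ] [TopologicalSpace X] [MulAction Γ X]
  [T2Space X] [CompactSpace X] [ContinuousConstSMul Γ X]
  {pm pp : Γ → X} {δ : Γ → X → ℝ} {f : X → X → ℝ}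

/-- The cocycle vanishes at every fixed point. -/
lemma fixed_zero (hmin : ∀ x : X, Dense (MulAction.orbit Γ x))
    (hhyp : ∀ γ : Γ, γ ≠ 1 → IsHyperbolic γ (pm γ) (pp γ))
    (hB : IsBCocycle δ f) (hℓ : ∀ γ : Γ, γ ≠ 1 → δ γ (pp γ) = 0)
    {γ : Γ} {x : X} (hfix : γ • x = x) : δ γ x = 0 := by
  rcases eq_or_ne γ 1 with rfl | hγ
  · exact cocycle_one hB.1 x
  have h := hhyp γ hγ
  rcases eq_or_ne x (pm γ) with rfl | hx
  · -- x = pm γ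
    have hinv : γ⁻¹ ≠ 1 := inv_ne_one.mpr hγ
    have h' := hhyp γ⁻¹ hinv
    have hi : IsHyperbolic γ⁻¹ (pp γ) (pm γ) := h.inv
    have huniq := hyp_unique hmin hhyp hi h'
    have hz : δ γ⁻¹ (pm γ) = 0 := by
      have := hℓ γ⁻¹ hinv
      rwa [huniq.2] at this
    have hco := cocycle_inv hB.1 γ (pm γ)
    rw [h.2.1] at hco
    rw [hz] at hco
    linarith
  · have hxp : x = pp γ := fixed_eq_pp h hfix hx
    rw [hxp]
    exact hℓ γ hγ

/-- Coboundary formula for powers, based at a fixed point of `γ`. -/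
lemma pow_formula (hmin : ∀ x : X, Dense (MulAction.orbit Γ x))
    (hhyp : ∀ γ : Γ, γ ≠ 1 → IsHyperbolic γ (pm γ) (pp γ))
    (hB : IsBCocycle δ f) (hℓ : ∀ γ : Γ, γ ≠ 1 → δ γ (pp γ) = 0)
    {γ : Γ} {w : X} (hw : γ • w = w) (n : ℕ) {y : X} (hy : y ≠ w) :
    δ (γ ^ n) y = f ((γ ^ n) • y) w - f y w := by
  have h0 : δ (γ ^ n) w = 0 :=
    fixed_zero hmin hhyp hB hℓ (smul_pow_fixed hw n)
  have law := hB.2.2.2 (γ ^ n) y w hy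
  rw [smul_pow_fixed hw n, h0] at law
  linarith

/-- Key limit identity: for a hyperbolic pair `(m, p) = (pm k, pp k)` and any `γ`
with `γ • p ≠ m`, the cocycle at `p` is a coboundary of `f (·, m)`. -/
lemma star_formula (hmin : ∀ x : X, Dense (MulAction.orbit Γ x))
    (hhyp : ∀ γ : Γ, γ ≠ 1 → IsHyperbolic γ (pm γ) (pp γ))
    (hB : IsBCocycle δ f) (hℓ : ∀ γ : Γ, γ ≠ 1 → δ γ (pp γ) = 0)
    {k : Γ} (hk : k ≠ 1) {γ : Γ} (hne : γ • pp k ≠ pm k) :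
    δ γ (pp k) = f (γ • pp k) (pm k) - f (pp k) (pm k) := by
  have hkhyp := hhyp k hk
  set m := pm k with hm
  set p := pp k with hp
  by_cases hfix : γ • p = p
  · rw [hfix, sub_self]
    exact fixed_zero hmin hhyp hB hℓ hfix
  -- main case
  set P : ℕ → X := fun n => pp (γ * k ^ n) with hPdef
  have hkn_ne : ∀ n : ℕ, γ * k ^ n ≠ 1 := by
    intro n h1
    apply hfix
    have hγeq : γ = (k ^ n)⁻¹ := eq_inv_of_mul_eq_one_left h1
    rw [hγeq, inv_smul_eq_iff]
    exact (smul_pow_fixed hkhyp.2.2.1 n).symm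
  have hconv : ∀ U : Set X, IsOpen U → γ • p ∈ U → ∃ N, ∀ n ≥ N, P n ∈ U := by
    intro U hU hgpU
    have hU' : U ∩ {x | x ≠ m} ∈ nhds (γ • p) :=
      Filter.inter_mem (hU.mem_nhds hgpU) (isOpen_ne.mem_nhds hne)
    obtain ⟨C, ⟨hCn, hCc⟩, hCsub⟩ := (closed_nhds_basis (γ • p)).mem_iff.mp hU'
    have hCcompact : IsCompact C := hCc.isCompact
    have hmC : m ∉ C := fun h => (hCsub h).2 rfl
    have hintC : γ • p ∈ interior C := mem_interior_iff_mem_nhds.mpr hCn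
    set V : Set X := (fun x => γ • x) ⁻¹' interior C with hVdef
    have hVopen : IsOpen V := isOpen_interior.preimage (continuous_const_smul γ)
    have hpV : p ∈ V := by simpa [hVdef] using hintC
    obtain ⟨N, hN⟩ := hkhyp.2.2.2.1 C hCcompact hmC V hVopen hpV
    refine ⟨N, fun n hn => ?_⟩
    have hmap : ∀ z ∈ C, (γ * k ^ n) • z ∈ interior C := by
      intro z hz
      have hv := hN n hn z hz
      rw [mul_smul]
      exact hv
    set kn := γ * k ^ n with hkndef
    have hknhyp := hhyp kn (hkn_ne n)
    obtain ⟨a, b, ha, hb, hab⟩ := open_two hmin hhyp hk isOpen_interior ⟨γ • p, hintC⟩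
    obtain ⟨xb, hxbC, hxbne⟩ : ∃ x, x ∈ interior C ∧ x ≠ pm kn := by
      rcases eq_or_ne a (pm kn) with e | e
      · exact ⟨b, hb, by rw [← e]; exact hab.symm⟩
      · exact ⟨a, ha, e⟩
    have hiter : ∀ j : ℕ, 1 ≤ j → kn ^ j • xb ∈ C := by
      intro j hj
      induction j with
      | zero => omega
      | succ j ih =>
        rcases Nat.eq_or_lt_of_le hj with e | lt
        · have : kn ^ 1 • xb = kn • xb := by rw [pow_one]
          rw [← e, this]
          exact interior_subset (hmap xb (interior_subset hxbC))
        · have hj1 : 1 ≤ j := by omega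
          have hprev := ih hj1
          rw [pow_succ', mul_smul]
          exact interior_subset (hmap _ hprev)
    -- P n ∈ C
    by_contra hPC
    have hPCc : P n ∈ Cᶜ := fun h => hPC ((hCsub h).1)
    obtain ⟨M, hM⟩ := hknhyp.2.2.2.1 {xb} isCompact_singleton
      (by simp [Ne.symm hxbne]) Cᶜ hCc.isOpen_compl hPCc
    have h1 := hM (max M 1) (le_max_left _ _) xb rfl
    exact h1 (hiter (max M 1) (le_max_right _ _))
  -- limits
  have htend : Filter.Tendsto P Filter.atTop (nhds (γ • p)) := by
    rw [tendsto_nhds]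
    intro s hs hgs
    obtain ⟨N, hN⟩ := hconv s hs hgs
    exact Filter.eventually_atTop.mpr ⟨N, hN⟩
  have hfcontAt : ∀ a b : X, a ≠ b → ContinuousAt (fun q : X × X => f q.1 q.2) (a, b) := by
    intro a b hab
    exact hB.2.2.1.continuousAt (isOpen_offdiag.mem_nhds hab)
  have htendinv : Filter.Tendsto (fun n => γ⁻¹ • P n) Filter.atTop (nhds p) := by
    have := ((continuous_const_smul γ⁻¹).tendsto (γ • p)).comp htend
    rwa [inv_smul_smul] at this
  have htendA : Filter.Tendsto (fun n => δ γ (γ⁻¹ • P n)) Filter.atTop (nhds (δ γ p)) :=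
    ((hB.2.1 γ).tendsto p).comp htendinv
  have htendB : Filter.Tendsto (fun n => f (P n) m - f (γ⁻¹ • P n) m)
      Filter.atTop (nhds (f (γ • p) m - f p m)) := by
    have h1 : Filter.Tendsto (fun n => ((P n : X), m)) Filter.atTop (nhds (γ • p, m)) :=
      htend.prodMk_nhds tendsto_const_nhds
    have h2 : Filter.Tendsto (fun n => ((γ⁻¹ • P n : X), m)) Filter.atTop (nhds (p, m)) :=
      htendinv.prodMk_nhds tendsto_const_nhds
    have hpm : p ≠ m := Ne.symm hkhyp.1
    exact ((hfcontAt _ _ hne).tendsto.comp h1).sub ((hfcontAt _ _ hpm).tendsto.comp h2)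
  have heq : ∀ᶠ n in Filter.atTop, δ γ (γ⁻¹ • P n) = f (P n) m - f (γ⁻¹ • P n) m := by
    obtain ⟨N, hN⟩ := hconv {x | x ≠ m} isOpen_ne hne
    refine Filter.eventually_atTop.mpr ⟨N, fun n hn => ?_⟩
    have hPm : P n ≠ m := hN n hn
    have hknfix : (γ * k ^ n) • P n = P n := (hhyp _ (hkn_ne n)).2.2.1
    have hzero : δ (γ * k ^ n) (P n) = 0 := hℓ _ (hkn_ne n)
    have hsplit := hB.1 γ (k ^ n) (P n)
    have hkP : (k ^ n) • P n = γ⁻¹ • P n := by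
      rw [mul_smul] at hknfix
      rw [eq_inv_smul_iff]
      exact hknfix
    have hpow := pow_formula hmin hhyp hB hℓ hkhyp.2.1 n hPm
    rw [hkP] at hpow
    rw [hzero, hkP, hpow] at hsplit
    linarith
  have := tendsto_nhds_unique (htendA.congr' heq) htendB
  rw [this]

end Main2
section Main3

variable {Γ X : Type*} [Group Γ] [TopologicalSpace X] [MulAction Γ X]
  [T2Space X] [CompactSpace X] [ContinuousConstSMul Γ X]
  {pm pp : Γ → X} {δ : Γ → X → ℝ} {f : X → X → ℝ}

/-- The coboundary formula at every point, based at `pm k`. -/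
lemma coboundary_orbit (hmin : ∀ x : X, Dense (MulAction.orbit Γ x))
    (hhyp : ∀ γ : Γ, γ ≠ 1 → IsHyperbolic γ (pm γ) (pp γ))
    (hB : IsBCocycle δ f) (hℓ : ∀ γ : Γ, γ ≠ 1 → δ γ (pp γ) = 0)
    {k : Γ} (hk : k ≠ 1) {γ : Γ} {y : X} (hy : y ≠ pm k) (hgy : γ • y ≠ pm k) :
    δ γ y = f (γ • y) (pm k) - f y (pm k) := by
  set m := pm k with hm
  set p := pp k with hp
  set O : Set X := {z | z ≠ m} ∩ (fun z => γ • z) ⁻¹' {z | z ≠ m} with hOdef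
  have hOopen : IsOpen O :=
    IsOpen.inter isOpen_ne (isOpen_ne.preimage (continuous_const_smul γ))
  have hyO : y ∈ O := ⟨hy, hgy⟩
  set g : X → ℝ := fun z => δ γ z - (f (γ • z) m - f z m) with hgdef
  have hgcont : ContinuousOn g O := by
    have h1 : ContinuousOn (fun z : X => f (γ • z) m) O := by
      have hmap : Set.MapsTo (fun z : X => ((γ • z : X), m)) O {q : X × X | q.1 ≠ q.2} :=
        fun z hz => hz.2
      exact hB.2.2.1.comp
        (((continuous_const_smul γ).prodMk continuous_const).continuousOn) hmap
    have h2 : ContinuousOn (fun z : X => f z m) O := by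
      have hmap : Set.MapsTo (fun z : X => ((z : X), m)) O {q : X × X | q.1 ≠ q.2} :=
        fun z hz => hz.1
      exact hB.2.2.1.comp ((continuous_id.prodMk continuous_const).continuousOn) hmap
    exact ((hB.2.1 γ).continuousOn).sub (h1.sub h2)
  have hvanish : ∀ η : Γ, η • p ∈ O → g (η • p) = 0 := by
    intro η hη
    have hη1 : η • p ≠ m := hη.1
    have hη2 : (γ * η) • p ≠ m := by rw [mul_smul]; exact hη.2
    have hs1 := star_formula hmin hhyp hB hℓ hk (γ := γ * η) hη2
    have hs2 := star_formula hmin hhyp hB hℓ hk (γ := η) hη1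
    have hco := hB.1 γ η p
    rw [mul_smul] at hs1
    simp only [hgdef]
    rw [← hp] at hs1 hs2
    rw [hs1, hs2] at hco
    linarith
  have hzero : g y = 0 := by
    by_contra hne0
    have hopen2 : IsOpen (O ∩ g ⁻¹' {t : ℝ | t ≠ 0}) :=
      hgcont.isOpen_inter_preimage hOopen isOpen_ne
    obtain ⟨z, hzorb, hz⟩ := (hmin p).exists_mem_open hopen2 ⟨y, hyO, hne0⟩
    obtain ⟨η, hη⟩ := MulAction.mem_orbit_iff.mp hzorb
    apply hz.2
    rw [← hη]
    exact hvanish η (by rw [hη]; exact hz.1)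
  simp only [hgdef] at hzero
  linarith

/-- The coboundary formula with an arbitrary base point. -/
lemma coboundary_all [Nontrivial Γ]
    (hmin : ∀ x : X, Dense (MulAction.orbit Γ x))
    (hhyp : ∀ γ : Γ, γ ≠ 1 → IsHyperbolic γ (pm γ) (pp γ))
    (hB : IsBCocycle δ f) (hℓ : ∀ γ : Γ, γ ≠ 1 → δ γ (pp γ) = 0)
    {γ : Γ} {y w : X} (h1 : w ≠ y) (h2 : w ≠ γ • y) :
    δ γ y = f (γ • y) w - f y w := by
  obtain ⟨γ₀, hγ₀⟩ := exists_ne (1 : Γ)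
  have h₀ := hhyp γ₀ hγ₀
  set O : Set X := {v | v ≠ γ • y} ∩ {v | v ≠ y} with hOdef
  have hOopen : IsOpen O := IsOpen.inter isOpen_ne isOpen_ne
  have hwO : w ∈ O := ⟨h2, h1⟩
  set g : X → ℝ := fun v => f (γ • y) v - f y v - δ γ y with hgdef
  have hgcont : ContinuousOn g O := by
    have hc : ∀ a : X, ContinuousOn (fun v : X => f a v) {v : X | v ≠ a} := by
      intro a
      have hmap : Set.MapsTo (fun v : X => ((a : X), v)) {v : X | v ≠ a}
          {q : X × X | q.1 ≠ q.2} := fun v hv => Ne.symm hv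
      exact hB.2.2.1.comp ((continuous_const.prodMk continuous_id).continuousOn) hmap
    have h1' : ContinuousOn (fun v : X => f (γ • y) v) O :=
      (hc (γ • y)).mono (fun v hv => hv.1)
    have h2' : ContinuousOn (fun v : X => f y v) O :=
      (hc y).mono (fun v hv => hv.2)
    exact (h1'.sub h2').sub continuousOn_const
  have hvanish : ∀ α : Γ, α • pm γ₀ ∈ O → g (α • pm γ₀) = 0 := by
    intro α hα
    set kα := α * γ₀ * α⁻¹ with hkα
    have hkαne : kα ≠ 1 := by
      intro e
      apply hγ₀
      have h' : γ₀ = α⁻¹ * kα * α := by rw [hkα]; group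
      rw [h', e]; group
    have hconj : IsHyperbolic kα (α • pm γ₀) (α • pp γ₀) := h₀.conj α
    have huniq := hyp_unique hmin hhyp hconj (hhyp kα hkαne)
    have hpmkα : pm kα = α • pm γ₀ := huniq.1
    have hyne : y ≠ pm kα := by rw [hpmkα]; exact fun e => hα.2 e.symm
    have hgyne : γ • y ≠ pm kα := by rw [hpmkα]; exact fun e => hα.1 e.symm
    have := coboundary_orbit hmin hhyp hB hℓ hkαne hyne hgyne
    rw [hpmkα] at this
    simp only [hgdef]
    linarith
  have hzero : g w = 0 := by
    by_contra hne0
    have hopen2 : IsOpen (O ∩ g ⁻¹' {t : ℝ | t ≠ 0}) :=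
      hgcont.isOpen_inter_preimage hOopen isOpen_ne
    obtain ⟨z, hzorb, hz⟩ := (hmin (pm γ₀)).exists_mem_open hopen2 ⟨w, hwO, hne0⟩
    obtain ⟨α, hα⟩ := MulAction.mem_orbit_iff.mp hzorb
    apply hz.2
    rw [← hα]
    exact hvanish α (by rw [hα]; exact hz.1)
  simp only [hgdef] at hzero
  linarith

end Main3
theorem stmt10 {Γ X : Type*} [Group Γ] [Nontrivial Γ] [TopologicalSpace X]
    [MeasurableSpace X] [MulAction Γ X]
    (pm pp : Γ → X) (hgb : IsGeometricBoundary Γ X pm pp)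
    (δ : Γ → X → ℝ) (f : X → X → ℝ) (hB : IsBCocycle δ f)
    (hℓ : ∀ γ : Γ, γ ≠ 1 → δ γ (pp γ) = 0) :
    ∃ M : ℝ, 0 ≤ M ∧ ∀ γ : Γ, ∀ x : X, |δ γ x| ≤ M := by
  haveI := hgb.compact
  haveI := hgb.t2
  haveI := hgb.contSMul
  have hmin := hgb.minimal
  have hhyp := hgb.hyp
  obtain ⟨γ₀, hγ₀⟩ := exists_ne (1 : Γ)
  have h₀ := hhyp γ₀ hγ₀
  obtain ⟨z₃, h31, h32⟩ := exists_third hmin hhyp h₀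
  set z₁ := pm γ₀ with hz1
  set z₂ := pp γ₀ with hz2
  have h12 : z₁ ≠ z₂ := h₀.1
  -- three pairwise disjoint open neighborhoods
  obtain ⟨U₁, U₂, hU₁, hU₂, h1U, h2U, d12⟩ := t2_separation h12
  obtain ⟨V₁, V₃, hV₁, hV₃, h1V, h3V, d13⟩ := t2_separation (Ne.symm h31)
  obtain ⟨W₂, W₃, hW₂, hW₃, h2W, h3W, d23⟩ := t2_separation (Ne.symm h32)
  set N₁ := U₁ ∩ V₁ with hN1
  set N₂ := U₂ ∩ W₂ with hN2
  set N₃ := V₃ ∩ W₃ with hN3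
  have hz1N : z₁ ∈ N₁ := ⟨h1U, h1V⟩
  have hz2N : z₂ ∈ N₂ := ⟨h2U, h2W⟩
  have hz3N : z₃ ∈ N₃ := ⟨h3V, h3W⟩
  have hN1o : IsOpen N₁ := hU₁.inter hV₁
  have hN2o : IsOpen N₂ := hU₂.inter hW₂
  have hN3o : IsOpen N₃ := hV₃.inter hW₃
  have hd12 : ∀ z : X, z ∈ N₁ → z ∈ N₂ → False :=
    fun z h1 h2 => Set.disjoint_left.mp d12 h1.1 h2.1
  have hd13 : ∀ z : X, z ∈ N₁ → z ∈ N₃ → False :=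
    fun z h1 h2 => Set.disjoint_left.mp d13 h1.2 h2.1
  have hd23 : ∀ z : X, z ∈ N₂ → z ∈ N₃ → False :=
    fun z h1 h2 => Set.disjoint_left.mp d23 h1.2 h2.2
  -- bounds on f(·, z_j) on the complement of N_j
  have hbound : ∀ (N : Set X) (zj : X), IsOpen N → zj ∈ N → (Nᶜ : Set X).Nonempty →
      ∃ Mj : ℝ, 0 ≤ Mj ∧ ∀ u ∈ (Nᶜ : Set X), |f u zj| ≤ Mj := by
    intro N zj hNo hzjN hne
    have hKc : IsCompact (Nᶜ : Set X) := hNo.isClosed_compl.isCompact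
    have hcont : ContinuousOn (fun u : X => |f u zj|) (Nᶜ : Set X) := by
      have hmap : Set.MapsTo (fun u : X => ((u : X), zj)) (Nᶜ : Set X)
          {q : X × X | q.1 ≠ q.2} := by
        intro u hu
        show u ≠ zj
        exact fun e => hu (by rw [e]; exact hzjN)
      exact (hB.2.2.1.comp ((continuous_id.prodMk continuous_const).continuousOn)
        hmap).abs
    obtain ⟨u₀, hu₀, hmax⟩ := hKc.exists_isMaxOn hne hcont
    exact ⟨|f u₀ zj|, abs_nonneg _, fun u hu => hmax hu⟩
  have hne1 : (N₁ᶜ : Set X).Nonempty := ⟨z₂, fun h => hd12 z₂ h hz2N⟩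
  have hne2 : (N₂ᶜ : Set X).Nonempty := ⟨z₁, fun h => hd12 z₁ hz1N h⟩
  have hne3 : (N₃ᶜ : Set X).Nonempty := ⟨z₁, fun h => hd13 z₁ hz1N h⟩
  obtain ⟨M₁, hM₁0, hM₁⟩ := hbound N₁ z₁ hN1o hz1N hne1
  obtain ⟨M₂, hM₂0, hM₂⟩ := hbound N₂ z₂ hN2o hz2N hne2
  obtain ⟨M₃, hM₃0, hM₃⟩ := hbound N₃ z₃ hN3o hz3N hne3
  refine ⟨2 * (M₁ + M₂ + M₃), by linarith, fun γ x => ?_⟩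
  -- pick an index j such that neither x nor γ • x lies in N_j
  have hsel : (x ∉ N₁ ∧ γ • x ∉ N₁) ∨ (x ∉ N₂ ∧ γ • x ∉ N₂) ∨
      (x ∉ N₃ ∧ γ • x ∉ N₃) := by
    by_cases hx1 : x ∈ N₁
    · have hx2 : x ∉ N₂ := fun h => hd12 x hx1 h
      have hx3 : x ∉ N₃ := fun h => hd13 x hx1 h
      by_cases hg2 : γ • x ∈ N₂
      · exact Or.inr (Or.inr ⟨hx3, fun h => hd23 (γ • x) hg2 h⟩)
      · exact Or.inr (Or.inl ⟨hx2, hg2⟩)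
    · by_cases hg1 : γ • x ∈ N₁
      · have hg2 : γ • x ∉ N₂ := fun h => hd12 _ hg1 h
        have hg3 : γ • x ∉ N₃ := fun h => hd13 _ hg1 h
        by_cases hx2 : x ∈ N₂
        · exact Or.inr (Or.inr ⟨fun h => hd23 x hx2 h, hg3⟩)
        · exact Or.inr (Or.inl ⟨hx2, hg2⟩)
      · exact Or.inl ⟨hx1, hg1⟩
  have happly : ∀ (N : Set X) (zj : X) (Mj : ℝ), zj ∈ N → x ∉ N → γ • x ∉ N →
      (∀ u ∈ (Nᶜ : Set X), |f u zj| ≤ Mj) → |δ γ x| ≤ 2 * Mj := by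
    intro N zj Mj hzjN hxN hgxN hMj
    have hzx : zj ≠ x := fun e => hxN (by rw [← e]; exact hzjN)
    have hzgx : zj ≠ γ • x := fun e => hgxN (by rw [← e]; exact hzjN)
    have hform := coboundary_all hmin hhyp hB hℓ hzx hzgx
    rw [hform]
    have b1 := hMj (γ • x) hgxN
    have b2 := hMj x hxN
    calc |f (γ • x) zj - f x zj| ≤ |f (γ • x) zj| + |f x zj| := abs_sub _ _
      _ ≤ 2 * Mj := by linarith
  rcases hsel with ⟨hx, hgx⟩ | ⟨hx, hgx⟩ | ⟨hx, hgx⟩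
  · have := happly N₁ z₁ M₁ hz1N hx hgx hM₁; linarith
  · have := happly N₂ z₂ M₂ hz2N hx hgx hM₂; linarith
  · have := happly N₃ z₃ M₃ hz3N hx hgx hM₃; linarith
end

section
/- Let Γ be a countable group acting on a measurable space X by measurable bijections, and let δ : Γ × X → ℝ be a cocycle (δ(γη, x) = δ(γ, ηx) + δ(η, x)) such that x ↦ δ(γ, x) is measurable for each γ ∈ Γ and |δ(γ, x)| ≤ M for all γ ∈ Γ, x ∈ X, for some constant M. Then there exists a bounded measurable function φ : X → ℝ such that δ(γ, x) = φ(γx) − φ(x) for all γ ∈ Γ and x ∈ X. -/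
theorem stmt11 {Γ X : Type*} [Group Γ] [Countable Γ] [MeasurableSpace X]
    [MulAction Γ X]
    (hact : ∀ γ : Γ, Measurable fun x : X => γ • x)
    (δ : Γ → X → ℝ)
    (hcoc : ∀ γ η : Γ, ∀ x : X, δ (γ * η) x = δ γ (η • x) + δ η x)
    (hmeas : ∀ γ : Γ, Measurable (δ γ))
    (M : ℝ) (hbd : ∀ γ : Γ, ∀ x : X, |δ γ x| ≤ M) :
    ∃ φ : X → ℝ, Measurable φ ∧ (∃ M' : ℝ, ∀ x : X, |φ x| ≤ M') ∧
      ∀ γ : Γ, ∀ x : X, δ γ x = φ (γ • x) - φ x := by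
  have hone : ∀ x : X, δ 1 x = 0 := by
    intro x
    have := hcoc 1 1 x
    simp at this
    linarith
  have hbdd : ∀ x : X, BddAbove (Set.range fun η : Γ => δ η x) := by
    intro x
    exact ⟨M, by rintro _ ⟨η, rfl⟩; exact (abs_le.1 (hbd η x)).2⟩
  refine ⟨fun x => -⨆ η : Γ, δ η x, ?_, ⟨M, ?_⟩, ?_⟩
  · exact (Measurable.iSup fun η => hmeas η).neg
  · intro x
    rw [abs_neg, abs_le]
    constructor
    · have := le_ciSup (hbdd x) (1 : Γ)
      rw [hone x] at this
      have hM : 0 ≤ M := (abs_nonneg _).trans (hbd 1 x)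
      linarith [this]
    · exact ciSup_le fun η => (abs_le.1 (hbd η x)).2
  · intro γ x
    have key : (⨆ η : Γ, δ η (γ • x)) = (⨆ η : Γ, δ η x) - δ γ x := by
      apply le_antisymm
      · apply ciSup_le
        intro η
        have h1 := hcoc η γ x
        have h2 := le_ciSup (hbdd x) (η * γ)
        linarith
      · rw [sub_le_iff_le_add]
        apply ciSup_le
        intro η
        have h1 := hcoc (η * γ⁻¹) γ x
        simp at h1
        have h2 := le_ciSup (hbdd (γ • x)) (η * γ⁻¹)
        linarith
    show δ γ x = -(⨆ η : Γ, δ η (γ • x)) - -(⨆ η : Γ, δ η x)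
    rw [key]; ring
end

section
/- Let G be a topological group acting continuously on a compact Hausdorff space X with at least three points, let L ≤ G be a dense subgroup, and let (β, f) be a B-cocycle of L over X. Then β extends to a B-cocycle of G with the same function f: there exists β̄ : G × X → ℝ such that β̄(l, x) = β(l, x) for all l ∈ L and x ∈ X, β̄ is a cocycle (β̄(g₁g₂, x) = β̄(g₁, g₂x) + β̄(g₂, x)), x ↦ β̄(g, x) is continuous for every g ∈ G, and β̄(g, x) + β̄(g, y) = f(gx, gy) − f(x, y) for all g ∈ G and all x ≠ y in X. -/
/-!
Write `φ_g(x, y) = f(gx, gy) - f(x, y)`. The B-cocycle relation says that for `l ∈ L` the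
function `φ_l` splits off the diagonal as `β(l, x) + β(l, y)`. On a set with at least three
points such a splitting `c` is unique and is recovered as the "Gromov product"
`c x = (φ(x, y) + φ(x, z) - φ(y, z)) / 2` for any `y, z` distinct from `x` and each other.
A function `φ` splits off the diagonal iff it is symmetric and its Gromov products do not depend
on the auxiliary points; these are equations between functions of `g` that are continuous, so
they pass from the dense set `L` to all of `G`. The splitting `β̄(g, ·)` of `φ_g` is continuous
because it is locally given by a Gromov product with fixed auxiliary points, and the cocycle
identity follows from uniqueness of splittings, since `φ` is itself a cocycle in `g`.
-/

section OffDiagSum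

variable {X : Type*}

def IsOffDiagSum (φ : X → X → ℝ) (c : X → ℝ) : Prop :=
  ∀ x y, x ≠ y → φ x y = c x + c y

noncomputable def gromovProduct (φ : X → X → ℝ) (x y z : X) : ℝ :=
  (φ x y + φ x z - φ y z) / 2

lemma exists_ne_and_ne_of_three (hX : ∃ a b c : X, a ≠ b ∧ a ≠ c ∧ b ≠ c) (x y : X) :
    ∃ w, w ≠ x ∧ w ≠ y := by
  obtain ⟨a, b, c, hab, hac, hbc⟩ := hX
  by_contra! h
  have := h a
  have := h b
  have := h c
  by_cases a = x <;> by_cases b = x <;> by_cases c = x <;> simp_all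

lemma exists_pair_ne_of_three (hX : ∃ a b c : X, a ≠ b ∧ a ≠ c ∧ b ≠ c) (x : X) :
    ∃ y z, x ≠ y ∧ x ≠ z ∧ y ≠ z := by
  obtain ⟨y, hyx, -⟩ := exists_ne_and_ne_of_three hX x x
  obtain ⟨z, hzx, hzy⟩ := exists_ne_and_ne_of_three hX x y
  exact ⟨y, z, hyx.symm, hzx.symm, hzy.symm⟩

variable {φ : X → X → ℝ} {c c' : X → ℝ}

lemma IsOffDiagSum.symm (h : IsOffDiagSum φ c) {x y : X} (hxy : x ≠ y) : φ x y = φ y x := by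
  rw [h x y hxy, h y x hxy.symm, add_comm]

lemma IsOffDiagSum.gromovProduct_eq (h : IsOffDiagSum φ c) {x y z : X}
    (hxy : x ≠ y) (hxz : x ≠ z) (hyz : y ≠ z) : gromovProduct φ x y z = c x := by
  simp only [gromovProduct, h x y hxy, h x z hxz, h y z hyz]
  ring

lemma IsOffDiagSum.unique (hX : ∃ a b c : X, a ≠ b ∧ a ≠ c ∧ b ≠ c)
    (h : IsOffDiagSum φ c) (h' : IsOffDiagSum φ c') : c = c' := by
  funext x
  obtain ⟨y, z, hxy, hxz, hyz⟩ := exists_pair_ne_of_three hX x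
  rw [← h.gromovProduct_eq hxy hxz hyz, h'.gromovProduct_eq hxy hxz hyz]

lemma exists_isOffDiagSum (hX : ∃ a b c : X, a ≠ b ∧ a ≠ c ∧ b ≠ c)
    (hsymm : ∀ x y, x ≠ y → φ x y = φ y x)
    (hgromov : ∀ x y z y' z', x ≠ y → x ≠ z → y ≠ z → x ≠ y' → x ≠ z' → y' ≠ z' →
      gromovProduct φ x y z = gromovProduct φ x y' z') :
    ∃ c, IsOffDiagSum φ c := by
  choose Y Z hY hZ hYZ using exists_pair_ne_of_three hX
  refine ⟨fun x => gromovProduct φ x (Y x) (Z x), fun x y hxy => ?_⟩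
  obtain ⟨w, hwx, hwy⟩ := exists_ne_and_ne_of_three hX x y
  dsimp only
  rw [hgromov x _ _ y w (hY x) (hZ x) (hYZ x) hxy hwx.symm hwy.symm,
    hgromov y _ _ x w (hY y) (hZ y) (hYZ y) hxy.symm hwy.symm hwx.symm]
  simp only [gromovProduct, hsymm y x hxy.symm]
  ring

lemma IsOffDiagSum.continuous [TopologicalSpace X] [T2Space X]
    (hX : ∃ a b c : X, a ≠ b ∧ a ≠ c ∧ b ≠ c) (h : IsOffDiagSum φ c)
    (hφ : ContinuousOn (fun q : X × X => φ q.1 q.2) {q | q.1 ≠ q.2}) : Continuous c := by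
  refine continuous_iff_continuousAt.2 fun x₀ => ?_
  obtain ⟨y, z, hxy, hxz, hyz⟩ := exists_pair_ne_of_three hX x₀
  have hlocal : (fun x => gromovProduct φ x y z) =ᶠ[nhds x₀] c := by
    filter_upwards [isOpen_ne.mem_nhds hxy, isOpen_ne.mem_nhds hxz] with x hxy' hxz'
    exact h.gromovProduct_eq hxy' hxz' hyz
  have hφ_at : ∀ w, x₀ ≠ w → ContinuousAt (fun x => φ x w) x₀ := fun w hw =>
    (hφ.continuousAt ((isOpen_ne_fun continuous_fst continuous_snd).mem_nhds hw)).comp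
      (continuous_id.prodMk continuous_const).continuousAt
  exact ((((hφ_at y hxy).add (hφ_at z hxz)).sub continuousAt_const).div_const 2).congr hlocal

end OffDiagSum

section Coboundary

variable {G X : Type*} [Group G] [MulAction G X] {f : X → X → ℝ}

def coboundary (f : X → X → ℝ) (g : G) (x y : X) : ℝ :=
  f (g • x) (g • y) - f x y

lemma coboundary_mul (g₁ g₂ : G) (x y : X) :
    coboundary f (g₁ * g₂) x y = coboundary f g₁ (g₂ • x) (g₂ • y) + coboundary f g₂ x y := by
  simp only [coboundary, mul_smul]
  ring

lemma IsOffDiagSum.coboundary_mul {g₁ g₂ : G} {c₁ c₂ : X → ℝ}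
    (h₁ : IsOffDiagSum (coboundary f g₁) c₁) (h₂ : IsOffDiagSum (coboundary f g₂) c₂) :
    IsOffDiagSum (coboundary f (g₁ * g₂)) (fun x => c₁ (g₂ • x) + c₂ x) := by
  intro x y hxy
  rw [_root_.coboundary_mul, h₁ _ _ ((MulAction.injective g₂).ne hxy), h₂ x y hxy]
  ring

variable [TopologicalSpace X]
  (hf : ContinuousOn (fun q : X × X => f q.1 q.2) {q | q.1 ≠ q.2})
include hf

lemma continuousOn_coboundary [ContinuousConstSMul G X] (g : G) :
    ContinuousOn (fun q : X × X => coboundary f g q.1 q.2) {q | q.1 ≠ q.2} := by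
  have hmaps : Set.MapsTo (fun q : X × X => (g • q.1, g • q.2)) {q | q.1 ≠ q.2}
      {q | q.1 ≠ q.2} := fun q hq => (MulAction.injective g).ne hq
  exact (hf.comp ((continuous_const_smul g).prodMap (continuous_const_smul g)).continuousOn
    hmaps).sub hf

variable [TopologicalSpace G] [ContinuousSMul G X]

lemma continuous_coboundary_apply {x y : X} (hxy : x ≠ y) :
    Continuous fun g : G => coboundary f g x y := by
  have hmap : Continuous fun g : G => (g • x, g • y) :=
    (continuous_id.smul continuous_const).prodMk (continuous_id.smul continuous_const)
  exact (hf.comp_continuous hmap fun g => (MulAction.injective g).ne hxy).sub continuous_const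

lemma continuous_gromovProduct_coboundary {x y z : X} (hxy : x ≠ y) (hxz : x ≠ z)
    (hyz : y ≠ z) : Continuous fun g : G => gromovProduct (coboundary f g) x y z :=
  (((continuous_coboundary_apply hf hxy).add (continuous_coboundary_apply hf hxz)).sub
    (continuous_coboundary_apply hf hyz)).div_const 2

lemma exists_isOffDiagSum_coboundary_of_dense (hX : ∃ a b c : X, a ≠ b ∧ a ≠ c ∧ b ≠ c)
    {S : Set G} (hS : Dense S) (hsplit : ∀ l ∈ S, ∃ c, IsOffDiagSum (coboundary f l) c)
    (g : G) : ∃ c, IsOffDiagSum (coboundary f g) c := by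
  have extend : ∀ u v : G → ℝ, Continuous u → Continuous v → (∀ l ∈ S, u l = v l) →
      u g = v g := fun u v hu hv huv => congrFun (hu.ext_on hS hv huv) g
  apply exists_isOffDiagSum hX
  · intro x y hxy
    refine extend _ _ (continuous_coboundary_apply hf hxy)
      (continuous_coboundary_apply hf hxy.symm) fun l hl => ?_
    obtain ⟨c, hc⟩ := hsplit l hl
    exact hc.symm hxy
  · intro x y z y' z' h₁ h₂ h₃ h₄ h₅ h₆
    refine extend _ _ (continuous_gromovProduct_coboundary hf h₁ h₂ h₃)
      (continuous_gromovProduct_coboundary hf h₄ h₅ h₆) fun l hl => ?_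
    obtain ⟨c, hc⟩ := hsplit l hl
    rw [hc.gromovProduct_eq h₁ h₂ h₃, hc.gromovProduct_eq h₄ h₅ h₆]

end Coboundary

theorem stmt13_general {G X : Type*} [Group G] [TopologicalSpace G]
    [TopologicalSpace X] [T2Space X]
    [MulAction G X] [ContinuousSMul G X]
    (hX : ∃ x y z : X, x ≠ y ∧ x ≠ z ∧ y ≠ z)
    (L : Subgroup G) (hL : Dense (L : Set G))
    (β : L → X → ℝ) (f : X → X → ℝ)
    (hf : ContinuousOn (fun q : X × X => f q.1 q.2) {q : X × X | q.1 ≠ q.2})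
    (hrel : ∀ l : L, ∀ x y : X, x ≠ y →
      f ((l : G) • x) ((l : G) • y) - f x y = β l x + β l y) :
    ∃ b : G → X → ℝ,
      (∀ l : L, ∀ x : X, b (l : G) x = β l x) ∧
      (∀ g₁ g₂ : G, ∀ x : X, b (g₁ * g₂) x = b g₁ (g₂ • x) + b g₂ x) ∧
      (∀ g : G, Continuous (b g)) ∧
      (∀ g : G, ∀ x y : X, x ≠ y → b g x + b g y = f (g • x) (g • y) - f x y) := by
  have hβ : ∀ l : L, IsOffDiagSum (coboundary f (l : G)) (β l) := hrel
  choose b hb using exists_isOffDiagSum_coboundary_of_dense hf hX hL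
    fun l hl => ⟨β ⟨l, hl⟩, hβ ⟨l, hl⟩⟩
  refine ⟨b, fun l => congrFun ((hb l).unique hX (hβ l)), fun g₁ g₂ x => ?_,
    fun g => (hb g).continuous hX (continuousOn_coboundary hf g),
    fun g x y hxy => (hb g x y hxy).symm⟩
  exact congrFun ((hb (g₁ * g₂)).unique hX ((hb g₁).coboundary_mul (hb g₂))) x

theorem stmt13 {G X : Type*} [Group G] [TopologicalSpace G] [IsTopologicalGroup G]
    [TopologicalSpace X] [CompactSpace X] [T2Space X]
    [MulAction G X] [ContinuousSMul G X]
    (hX : ∃ x y z : X, x ≠ y ∧ x ≠ z ∧ y ≠ z)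
    (L : Subgroup G) (hL : Dense (L : Set G))
    (β : L → X → ℝ) (f : X → X → ℝ)
    (hcoc : ∀ l₁ l₂ : L, ∀ x : X, β (l₁ * l₂) x = β l₁ ((l₂ : G) • x) + β l₂ x)
    (hcont : ∀ l : L, Continuous (β l))
    (hf : ContinuousOn (fun q : X × X => f q.1 q.2) {q : X × X | q.1 ≠ q.2})
    (hrel : ∀ l : L, ∀ x y : X, x ≠ y →
      f ((l : G) • x) ((l : G) • y) - f x y = β l x + β l y) :
    ∃ b : G → X → ℝ,
      (∀ l : L, ∀ x : X, b (l : G) x = β l x) ∧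
      (∀ g₁ g₂ : G, ∀ x : X, b (g₁ * g₂) x = b g₁ (g₂ • x) + b g₂ x) ∧
      (∀ g : G, Continuous (b g)) ∧
      (∀ g : G, ∀ x y : X, x ≠ y → b g x + b g y = f (g • x) (g • y) - f x y) :=
  stmt13_general hX L hL β f hf hrel
end

section
/- Let Γ be a group and X a general geometric boundary for Γ that contains at least one element of Γ acting as a hyperbolic homeomorphism. Let α, β : Γ × X → ℝ be two B-cocycles such that α(γ, γ⁺) = β(γ, γ⁺) for every γ ∈ Γ acting as a hyperbolic homeomorphism (γ⁺ its attracting fixed point). Then there exists a continuous function φ : X → ℝ with α(γ, x) − β(γ, x) = φ(γx) − φ(x) for all γ ∈ Γ and x ∈ X. -/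
open MeasureTheory

structure IsGeneralGeometricBoundary (Γ X : Type*) [Group Γ] [TopologicalSpace X]
    [MeasurableSpace X] [MulAction Γ X] : Prop where
  compact : CompactSpace X
  t2 : T2Space X
  nontrivial : Nontrivial X
  contSMul : ContinuousConstSMul Γ X
  borel : BorelSpace X
  minimal : ∀ x : X, Dense (MulAction.orbit Γ x)
  unbounded : ∀ η γ : Γ, ∀ m p : X, IsHyperbolic γ m p → η • p ≠ m →
    ∀ N : ℤ, ∃ n : ℤ, N ≤ n ∧ ∃ m' p' : X, IsHyperbolic (η * γ ^ n) m' p'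
  measures : ∃ μ μ' : Measure X, μ ≠ 0 ∧ μ' ≠ 0 ∧
    IsFiniteMeasure μ ∧ IsFiniteMeasure μ' ∧
    (∀ γ : Γ, ∀ E : Set X, MeasurableSet E → (μ E = 0 ↔ μ ((γ • ·) ⁻¹' E) = 0)) ∧
    (∀ γ : Γ, ∀ E : Set X, MeasurableSet E → (μ' E = 0 ↔ μ' ((γ • ·) ⁻¹' E) = 0)) ∧
    (∀ S : Set (X × X), MeasurableSet S →
      (∀ γ : Γ, (fun q : X × X => (γ • q.1, γ • q.2)) ⁻¹' S = S) →
      μ.prod μ' S = 0 ∨ μ.prod μ' Sᶜ = 0)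

/-! ### Auxiliary lemmas -/

section Aux

lemma eq_of_abs_forall {a b : ℝ} (h : ∀ ε : ℝ, 0 < ε → |a - b| < ε) : a = b := by
  by_contra hne
  exact lt_irrefl _ (h _ (abs_pos.mpr (sub_ne_zero.mpr hne)))

lemma abs_combo {a₁ a₂ a₃ b₁ b₂ b₃ ε : ℝ} (h1 : |b₁ - a₁| < ε / 3) (h2 : |b₂ - a₂| < ε / 3)
    (h3 : |b₃ - a₃| < ε / 3) (h0 : b₁ - b₂ + b₃ = 0) : |a₁ - a₂ + a₃| < ε := by
  have e1 := abs_lt.mp h1; have e2 := abs_lt.mp h2; have e3 := abs_lt.mp h3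
  rw [abs_lt]; constructor <;> linarith [e1.1, e1.2, e2.1, e2.2, e3.1, e3.2]

lemma nbhd_abs {X : Type*} [TopologicalSpace X] {f : X → ℝ} {x : X} (hf : ContinuousAt f x)
    {ε : ℝ} (hε : 0 < ε) : ∃ O : Set X, IsOpen O ∧ x ∈ O ∧ ∀ z ∈ O, |f z - f x| < ε := by
  have h1 : f ⁻¹' Metric.ball (f x) ε ∈ nhds x :=
    hf.preimage_mem_nhds (Metric.ball_mem_nhds _ hε)
  obtain ⟨O, hO1, hO2, hO3⟩ := mem_nhds_iff.mp h1
  exact ⟨O, hO2, hO3, fun z hz => by simpa [Real.dist_eq] using hO1 hz⟩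

lemma contAt_D_left {X : Type*} [TopologicalSpace X] [T2Space X] {D : X → X → ℝ}
    (hD : ContinuousOn (fun q : X × X => D q.1 q.2) {q : X × X | q.1 ≠ q.2})
    (y : X) {x : X} (hxy : x ≠ y) : ContinuousAt (fun z => D z y) x := by
  have hopen : IsOpen {q : X × X | q.1 ≠ q.2} :=
    (isClosed_eq continuous_fst continuous_snd).isOpen_compl
  have h1 : ContinuousAt (fun q : X × X => D q.1 q.2) (x, y) :=
    hD.continuousAt (hopen.mem_nhds hxy)
  have h2 : ContinuousAt (fun z : X => (z, y)) x :=
    (continuous_id.prodMk continuous_const).continuousAt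
  exact ContinuousAt.comp (f := fun z : X => (z, y)) h1 h2

variable {Γ X : Type*} [Group Γ] [TopologicalSpace X] [MulAction Γ X]

lemma smul_pow_fix (σ : Γ) (a : X) (h : σ • a = a) : ∀ k : ℕ, (σ ^ k) • a = a := by
  intro k; induction k with
  | zero => simp
  | succ k ih => rw [pow_succ, mul_smul, h, ih]

lemma hyperbolic_inv {σ : Γ} {m p : X} (hσ : IsHyperbolic σ m p) : IsHyperbolic σ⁻¹ p m := by
  obtain ⟨hne, hm, hp, hfwd, hbwd⟩ := hσ
  refine ⟨hne.symm, ?_, ?_, hbwd, ?_⟩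
  · nth_rewrite 1 [← hp]; rw [inv_smul_smul]
  · nth_rewrite 1 [← hm]; rw [inv_smul_smul]
  · simpa [inv_inv] using hfwd

lemma c_repelling_zero {c : Γ → X → ℝ} {D : X → X → ℝ}
    (hequiv : ∀ γ : Γ, ∀ x y : X, x ≠ y → D (γ • x) (γ • y) - D x y = c γ x + c γ y)
    {σ : Γ} {m p : X} (hσ : IsHyperbolic σ m p) (hp0 : c σ p = 0) : c σ m = 0 := by
  have h := hequiv σ m p hσ.1
  rw [hσ.2.1, hσ.2.2.1] at h
  linarith

lemma c_pow_eq {c : Γ → X → ℝ} {D : X → X → ℝ} (hc : IsCocycle c)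
    (hequiv : ∀ γ : Γ, ∀ x y : X, x ≠ y → D (γ • x) (γ • y) - D x y = c γ x + c γ y)
    {σ : Γ} {m p : X} (hσ : IsHyperbolic σ m p) (hp0 : c σ p = 0) :
    ∀ (k : ℕ) (x : X), x ≠ m → c (σ ^ k) x = D ((σ ^ k) • x) m - D x m := by
  have hm0 : c σ m = 0 := c_repelling_zero hequiv hσ hp0
  have hstep : ∀ x : X, x ≠ m → c σ x = D (σ • x) m - D x m := by
    intro x hx
    have h := hequiv σ x m hx
    rw [hσ.2.1] at h
    linarith
  intro k
  induction k with
  | zero => intro x hx; simpa using cocycle_one hc x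
  | succ k ih =>
    intro x hx
    have hσx : σ • x ≠ m := by
      intro h
      apply hx
      have h2 : σ • x = σ • m := by rw [h, hσ.2.1]
      exact MulAction.injective σ h2
    rw [pow_succ, hc (σ ^ k) σ x, ih (σ • x) hσx, hstep x hx]
    rw [← mul_smul, ← pow_succ]
    ring

end Aux

/-! ### The key dynamical lemma -/

lemma star_lemma {Γ X : Type*} [Group Γ] [TopologicalSpace X] [MulAction Γ X]
    [CompactSpace X] [T2Space X] [ContinuousConstSMul Γ X]
    {c : Γ → X → ℝ} {D : X → X → ℝ}
    (hc : IsCocycle c) (hccont : ∀ γ : Γ, Continuous (c γ))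
    (hDcont : ContinuousOn (fun q : X × X => D q.1 q.2) {q : X × X | q.1 ≠ q.2})
    (hequiv : ∀ γ : Γ, ∀ x y : X, x ≠ y → D (γ • x) (γ • y) - D x y = c γ x + c γ y)
    (hzero : ∀ σ : Γ, ∀ m p : X, IsHyperbolic σ m p → c σ p = 0)
    (hub : ∀ η γ : Γ, ∀ m p : X, IsHyperbolic γ m p → η • p ≠ m →
      ∀ N : ℤ, ∃ n : ℤ, N ≤ n ∧ ∃ m' p' : X, IsHyperbolic (η * γ ^ n) m' p')
    (no_iso : ∀ x : X, ¬ IsOpen ({x} : Set X))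
    {σ : Γ} {m p : X} (hσ : IsHyperbolic σ m p) {η : Γ} (hη : η • p ≠ m) :
    c η p = D (η • p) m - D p m := by
  apply eq_of_abs_forall
  intro ε hε
  have hpm : p ≠ m := fun h => hσ.1 h.symm
  have hinv : η⁻¹ • (η • p) = p := inv_smul_smul η p
  -- three continuity data at η • p
  have hG₁ : ContinuousAt (fun x : X => c η (η⁻¹ • x)) (η • p) :=
    ((hccont η).comp (continuous_const_smul η⁻¹)).continuousAt
  have hG₂ : ContinuousAt (fun x : X => D x m) (η • p) := contAt_D_left hDcont m hη
  have hG₃ : ContinuousAt (fun x : X => D (η⁻¹ • x) m) (η • p) := by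
    have h1 : ContinuousAt (fun z : X => D z m) p := contAt_D_left hDcont m hpm
    rw [← hinv] at h1
    have h2 : ContinuousAt (fun x : X => η⁻¹ • x) (η • p) :=
      (continuous_const_smul η⁻¹).continuousAt
    exact ContinuousAt.comp (f := fun x : X => η⁻¹ • x) h1 h2
  obtain ⟨O₁, hO₁o, hO₁p, hO₁⟩ := nbhd_abs hG₁ (by linarith : (0:ℝ) < ε / 3)
  obtain ⟨O₂, hO₂o, hO₂p, hO₂⟩ := nbhd_abs hG₂ (by linarith : (0:ℝ) < ε / 3)
  obtain ⟨O₃, hO₃o, hO₃p, hO₃⟩ := nbhd_abs hG₃ (by linarith : (0:ℝ) < ε / 3)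
  -- separation
  obtain ⟨W₀, V, hW₀o, hVo, hηpW₀, hmV, hdisj⟩ := t2_separation hη
  have hηpm' : η • p ≠ η • m := fun h => hσ.1 (MulAction.injective η h).symm
  set W : Set X := W₀ ∩ {z : X | z ≠ η • m} ∩ O₁ ∩ O₂ ∩ O₃ with hWdef
  have hWo : IsOpen W :=
    ((((hW₀o.inter isOpen_ne).inter hO₁o).inter hO₂o).inter hO₃o)
  have hηpW : η • p ∈ W := ⟨⟨⟨⟨hηpW₀, hηpm'⟩, hO₁p⟩, hO₂p⟩, hO₃p⟩
  have hWsub : W ⊆ W₀ := fun z hz => hz.1.1.1.1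
  -- north-south estimate
  have hKc : IsCompact Vᶜ := hVo.isClosed_compl.isCompact
  have hmK : m ∉ Vᶜ := fun h => h hmV
  have hUo : IsOpen ((fun x : X => η • x) ⁻¹' W) := hWo.preimage (continuous_const_smul η)
  have hpU : p ∈ (fun x : X => η • x) ⁻¹' W := hηpW
  obtain ⟨N₁, hN₁⟩ := hσ.2.2.2.1 Vᶜ hKc hmK _ hUo hpU
  obtain ⟨n, hn, m', p', hρ⟩ := hub η σ m p hσ hη (N₁ : ℤ)
  have hn0 : (0 : ℤ) ≤ n := le_trans (Int.natCast_nonneg N₁) hn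
  have hzk : σ ^ n = σ ^ n.toNat := by
    have h2 : ((n.toNat : ℤ)) = n := Int.toNat_of_nonneg hn0
    nth_rewrite 1 [← h2]; rw [zpow_natCast]
  rw [hzk] at hρ
  set k : ℕ := n.toNat with hkdef
  have hkN₁ : N₁ ≤ k := by omega
  -- push
  have hpush : ∀ x : X, x ∉ V → (η * σ ^ k) • x ∈ W := by
    intro x hx
    have h1 : (σ ^ k) • x ∈ (fun x : X => η • x) ⁻¹' W := hN₁ k hkN₁ x hx
    rw [mul_smul]
    exact h1
  have hρfix : (η * σ ^ k) • p' = p' := hρ.2.2.1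
  -- localization of the attracting point
  have hp'V : p' ∉ V := by
    intro hp'V
    have hzex : ∃ z ∈ W, z ≠ m' := by
      by_contra h
      push_neg at h
      have hW1 : W = {m'} := Set.eq_singleton_iff_nonempty_unique_mem.mpr ⟨⟨_, hηpW⟩, h⟩
      exact no_iso m' (hW1 ▸ hWo)
    obtain ⟨z, hzW, hzm'⟩ := hzex
    have hchain : ∀ j : ℕ, ((η * σ ^ k) ^ j) • z ∈ W := by
      intro j; induction j with
      | zero => simpa using hzW
      | succ j ih =>
        have hnotV : ((η * σ ^ k) ^ j) • z ∉ V := fun h => Set.disjoint_left.mp hdisj (hWsub ih) h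
        rw [pow_succ', mul_smul]
        exact hpush _ hnotV
    obtain ⟨Nf, hNf⟩ := hρ.2.2.2.1 {z} isCompact_singleton
      (fun h => hzm' (by simpa using h.symm)) V hVo hp'V
    have h1 : ((η * σ ^ k) ^ Nf) • z ∈ V := hNf Nf le_rfl z rfl
    exact Set.disjoint_left.mp hdisj (hWsub (hchain Nf)) h1
  have hp'W : p' ∈ W := by
    have h1 := hpush p' hp'V
    rwa [hρfix] at h1
  have hp'm : p' ≠ m := by
    intro h
    exact Set.disjoint_left.mp hdisj (hWsub hp'W) (h ▸ hmV)
  have hp'invm : η⁻¹ • p' ≠ m := by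
    intro h
    have h2 : p' = η • m := by rw [← h, smul_inv_smul]
    exact hp'W.1.1.1.2 h2
  -- exact identity at p'
  have hinvp' : (σ ^ k) • p' = η⁻¹ • p' := by
    have h1 : η • ((σ ^ k) • p') = p' := by rw [← mul_smul]; exact hρfix
    have h2 := congrArg (fun z : X => η⁻¹ • z) h1
    simpa [inv_smul_smul] using h2
  have hc0 : c (η * σ ^ k) p' = 0 := hzero _ _ _ hρ
  have hsplit := hc η (σ ^ k) p'
  have hcp : c (σ ^ k) p' = D (η⁻¹ • p') m - D p' m := by
    rw [c_pow_eq hc hequiv hσ (hzero σ m p hσ) k p' hp'm, hinvp']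
  have hcomb : c η (η⁻¹ • p') - D p' m + D (η⁻¹ • p') m = 0 := by
    rw [hinvp'] at hsplit
    rw [hc0] at hsplit
    linarith [hcp]
  -- estimates
  have e₁ : |c η (η⁻¹ • p') - c η (η⁻¹ • (η • p))| < ε / 3 := hO₁ p' hp'W.1.1.2
  have e₂ : |D p' m - D (η • p) m| < ε / 3 := hO₂ p' hp'W.1.2
  have e₃ : |D (η⁻¹ • p') m - D (η⁻¹ • (η • p)) m| < ε / 3 := hO₃ p' hp'W.2
  rw [hinv] at e₁ e₃
  have hgoal : |c η p - D (η • p) m + D p m| < ε :=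
    abs_combo e₁ e₂ e₃ hcomb
  calc |c η p - (D (η • p) m - D p m)| = |c η p - D (η • p) m + D p m| := by ring_nf
  _ < ε := hgoal

/-! ### Globalization via minimality -/

lemma key_lemma {Γ X : Type*} [Group Γ] [TopologicalSpace X] [MulAction Γ X]
    [CompactSpace X] [T2Space X] [ContinuousConstSMul Γ X]
    {c : Γ → X → ℝ} {D : X → X → ℝ}
    (hc : IsCocycle c) (hccont : ∀ γ : Γ, Continuous (c γ))
    (hDcont : ContinuousOn (fun q : X × X => D q.1 q.2) {q : X × X | q.1 ≠ q.2})
    (hequiv : ∀ γ : Γ, ∀ x y : X, x ≠ y → D (γ • x) (γ • y) - D x y = c γ x + c γ y)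
    (hzero : ∀ σ : Γ, ∀ m p : X, IsHyperbolic σ m p → c σ p = 0)
    (hub : ∀ η γ : Γ, ∀ m p : X, IsHyperbolic γ m p → η • p ≠ m →
      ∀ N : ℤ, ∃ n : ℤ, N ≤ n ∧ ∃ m' p' : X, IsHyperbolic (η * γ ^ n) m' p')
    (no_iso : ∀ x : X, ¬ IsOpen ({x} : Set X))
    (hmin : ∀ x : X, Dense (MulAction.orbit Γ x))
    {σ : Γ} {m p : X} (hσ : IsHyperbolic σ m p) :
    ∀ (η : Γ) (x : X), x ≠ m → η • x ≠ m → c η x = D (η • x) m - D x m := by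
  intro η x hxm hηxm
  apply eq_of_abs_forall
  intro ε hε
  have hf₁ : ContinuousAt (fun z : X => c η z) x := (hccont η).continuousAt
  have hf₂ : ContinuousAt (fun z : X => D (η • z) m) x := by
    have h1 : ContinuousAt (fun z : X => D z m) (η • x) := contAt_D_left hDcont m hηxm
    have h2 : ContinuousAt (fun z : X => η • z) x := (continuous_const_smul η).continuousAt
    exact ContinuousAt.comp (f := fun z : X => η • z) h1 h2
  have hf₃ : ContinuousAt (fun z : X => D z m) x := contAt_D_left hDcont m hxm
  obtain ⟨O₁, hO₁o, hO₁p, hO₁⟩ := nbhd_abs hf₁ (by linarith : (0:ℝ) < ε / 3)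
  obtain ⟨O₂, hO₂o, hO₂p, hO₂⟩ := nbhd_abs hf₂ (by linarith : (0:ℝ) < ε / 3)
  obtain ⟨O₃, hO₃o, hO₃p, hO₃⟩ := nbhd_abs hf₃ (by linarith : (0:ℝ) < ε / 3)
  set O : Set X := O₁ ∩ O₂ ∩ O₃ ∩ {z : X | z ≠ m} ∩ {z : X | η • z ≠ m} with hOdef
  have hOo : IsOpen O := by
    refine (((hO₁o.inter hO₂o).inter hO₃o).inter isOpen_ne).inter ?_
    have : IsOpen ((fun z : X => η • z) ⁻¹' {w : X | w ≠ m}) :=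
      isOpen_ne.preimage (continuous_const_smul η)
    exact this
  have hxO : x ∈ O := ⟨⟨⟨⟨hO₁p, hO₂p⟩, hO₃p⟩, hxm⟩, hηxm⟩
  obtain ⟨y, hyOrb, hyO⟩ := (hmin p).exists_mem_open hOo ⟨x, hxO⟩
  obtain ⟨g, hg⟩ := MulAction.mem_orbit_iff.mp hyOrb
  have hy1 : y ≠ m := hyO.1.2
  have hy2 : η • y ≠ m := hyO.2
  have hgp : g • p ≠ m := by rw [hg]; exact hy1
  have hηgp : (η * g) • p ≠ m := by rw [mul_smul, hg]; exact hy2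
  have hstar_g : c g p = D (g • p) m - D p m :=
    star_lemma hc hccont hDcont hequiv hzero hub no_iso hσ hgp
  have hstar_ηg : c (η * g) p = D ((η * g) • p) m - D p m :=
    star_lemma hc hccont hDcont hequiv hzero hub no_iso hσ hηgp
  have hcoc := hc η g p
  have hval : c η y - D (η • y) m + D y m = 0 := by
    rw [← hg]
    rw [mul_smul] at hstar_ηg
    have : c η (g • p) = D (η • (g • p)) m - D (g • p) m := by linarith
    linarith [this]
  have e₁ : |c η y - c η x| < ε / 3 := hO₁ y hyO.1.1.1.1
  have e₂ : |D (η • y) m - D (η • x) m| < ε / 3 := hO₂ y hyO.1.1.1.2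
  have e₃ : |D y m - D x m| < ε / 3 := hO₃ y hyO.1.1.2
  have hgoal : |c η x - D (η • x) m + D x m| < ε := abs_combo e₁ e₂ e₃ hval
  calc |c η x - (D (η • x) m - D x m)| = |c η x - D (η • x) m + D x m| := by ring_nf
  _ < ε := hgoal

/-! ### Main construction -/

lemma main_aux {Γ X : Type*} [Group Γ] [TopologicalSpace X] [MulAction Γ X]
    [CompactSpace X] [T2Space X] [ContinuousConstSMul Γ X]
    (hmin : ∀ x : X, Dense (MulAction.orbit Γ x))
    (hub : ∀ η γ : Γ, ∀ m p : X, IsHyperbolic γ m p → η • p ≠ m →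
      ∀ N : ℤ, ∃ n : ℤ, N ≤ n ∧ ∃ m' p' : X, IsHyperbolic (η * γ ^ n) m' p')
    (hex : ∃ γ : Γ, ∃ m p : X, IsHyperbolic γ m p)
    {c : Γ → X → ℝ} {D : X → X → ℝ}
    (hc : IsCocycle c) (hccont : ∀ γ : Γ, Continuous (c γ))
    (hDcont : ContinuousOn (fun q : X × X => D q.1 q.2) {q : X × X | q.1 ≠ q.2})
    (hequiv : ∀ γ : Γ, ∀ x y : X, x ≠ y → D (γ • x) (γ • y) - D x y = c γ x + c γ y)
    (hzero : ∀ σ : Γ, ∀ m p : X, IsHyperbolic σ m p → c σ p = 0) :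
    ∃ φ : X → ℝ, Continuous φ ∧ ∀ (g : Γ) (x : X), c g x = φ (g • x) - φ x := by
  classical
  obtain ⟨σ₀, m₀, p₀, hσ₀⟩ := hex
  by_cases hiso : ∃ x : X, IsOpen ({x} : Set X)
  · -- degenerate case : X = {m₀, p₀}
    obtain ⟨x₀, hx₀⟩ := hiso
    have hsing : ∀ y : X, IsOpen ({y} : Set X) := by
      intro y
      obtain ⟨z, hzOrb, hzx⟩ := (hmin y).exists_mem_open hx₀ ⟨x₀, rfl⟩
      obtain ⟨g, hg⟩ := MulAction.mem_orbit_iff.mp hzOrb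
      have hgy : g • y = x₀ := by rw [hg]; exact hzx
      have heq : ({y} : Set X) = (fun w : X => g • w) ⁻¹' {x₀} := by
        ext w
        simp only [Set.mem_singleton_iff, Set.mem_preimage]
        constructor
        · rintro rfl; exact hgy
        · intro h
          apply MulAction.injective g
          show g • w = g • y
          rw [h, hgy]
      rw [heq]
      exact hx₀.preimage (continuous_const_smul g)
    have hdich : ∀ q : X, q = m₀ ∨ q = p₀ := by
      intro q
      by_cases hq : q = m₀
      · exact Or.inl hq
      · right
        obtain ⟨N, hN⟩ := hσ₀.2.2.2.1 {q} isCompact_singleton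
          (fun h => hq (by simpa using h.symm)) {p₀} (hsing p₀) rfl
        have h1 : (σ₀ ^ N) • q ∈ ({p₀} : Set X) := hN N le_rfl q rfl
        have h2 : (σ₀ ^ N) • p₀ = p₀ := smul_pow_fix σ₀ p₀ hσ₀.2.2.1 N
        apply MulAction.injective (σ₀ ^ N)
        show (σ₀ ^ N) • q = (σ₀ ^ N) • p₀
        rw [h2]; simpa using h1
    have hfix_or_swap : ∀ g : Γ, (g • m₀ = m₀ ∧ g • p₀ = p₀) ∨ (g • m₀ = p₀ ∧ g • p₀ = m₀) := by
      intro g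
      rcases hdich (g • m₀) with h1 | h1
      · left
        refine ⟨h1, ?_⟩
        rcases hdich (g • p₀) with h2 | h2
        · exact absurd (MulAction.injective g (h2.trans h1.symm)) (fun h => hσ₀.1 h.symm)
        · exact h2
      · right
        refine ⟨h1, ?_⟩
        rcases hdich (g • p₀) with h2 | h2
        · exact h2
        · exact absurd (MulAction.injective g (h2.trans h1.symm)) (fun h => hσ₀.1 h.symm)
    have hfix_c : ∀ g : Γ, g • m₀ = m₀ → g • p₀ = p₀ → c g m₀ = 0 ∧ c g p₀ = 0 := by
      intro g h1 h2
      have hhyp : IsHyperbolic g m₀ p₀ := by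
        refine ⟨hσ₀.1, h1, h2, ?_, ?_⟩
        · intro K _ hmK U _ hpU
          refine ⟨0, fun n _ x hx => ?_⟩
          have hx' : x = p₀ := by
            rcases hdich x with h | h
            · rw [h] at hx; exact absurd hx hmK
            · exact h
          rw [hx', smul_pow_fix g p₀ h2 n]; exact hpU
        · intro K _ hpK V _ hmV
          refine ⟨0, fun n _ x hx => ?_⟩
          have hx' : x = m₀ := by
            rcases hdich x with h | h
            · exact h
            · rw [h] at hx; exact absurd hx hpK
          have hginv : g⁻¹ • m₀ = m₀ := by nth_rewrite 1 [← h1]; rw [inv_smul_smul]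
          rw [hx', smul_pow_fix g⁻¹ m₀ hginv n]; exact hmV
      have hp := hzero g m₀ p₀ hhyp
      have hm : c g m₀ = 0 := by
        have h := hequiv g m₀ p₀ hσ₀.1
        rw [h1, h2] at h
        linarith
      exact ⟨hm, hp⟩
    have hswap_p : ∀ g : Γ, g • m₀ = p₀ → g • p₀ = m₀ := by
      intro g h1
      rcases hfix_or_swap g with h | h
      · exact absurd (h.1.symm.trans h1) hσ₀.1
      · exact h.2
    have hswap_sum : ∀ g : Γ, g • m₀ = p₀ → c g p₀ = - c g m₀ := by
      intro g h1
      have h2 := hswap_p g h1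
      have hgg : (g * g) • m₀ = m₀ := by rw [mul_smul, h1, h2]
      have hgg' : (g * g) • p₀ = p₀ := by rw [mul_smul, h2, h1]
      have h0 := (hfix_c (g * g) hgg hgg').1
      have h := hc g g m₀
      rw [h1] at h
      linarith
    have hswap_unique : ∀ g g' : Γ, g • m₀ = p₀ → g' • m₀ = p₀ → c g m₀ = c g' m₀ := by
      intro g g' h1 h1'
      have h2 := hswap_p g h1
      have hg2 : g⁻¹ • p₀ = m₀ := by nth_rewrite 1 [← h1]; rw [inv_smul_smul]
      have hg2' : g⁻¹ • m₀ = p₀ := by nth_rewrite 1 [← h2]; rw [inv_smul_smul]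
      have hfp : (g' * g⁻¹) • p₀ = p₀ := by rw [mul_smul, hg2, h1']
      have hfm : (g' * g⁻¹) • m₀ = m₀ := by rw [mul_smul, hg2', hswap_p g' h1']
      have hfc := (hfix_c (g' * g⁻¹) hfm hfp).2
      have h := hc (g' * g⁻¹) g m₀
      rw [h1] at h
      have hgg : g' * g⁻¹ * g = g' := by group
      rw [hgg] at h
      rw [h, hfc]
      ring
    have hallopen : ∀ S : Set X, IsOpen S := by
      intro S
      have hS : S = ⋃ x ∈ S, {x} := by simp
      rw [hS]
      exact isOpen_biUnion (fun x _ => hsing x)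
    by_cases hsw : ∃ g : Γ, g • m₀ = p₀
    · obtain ⟨g₁, hg₁⟩ := hsw
      refine ⟨fun x => if x = m₀ then 0 else c g₁ m₀, continuous_def.mpr (fun s _ => hallopen _), ?_⟩
      intro g x
      have hpm : p₀ ≠ m₀ := fun h => hσ₀.1 h.symm
      rcases hdich x with rfl | rfl
      · rcases hfix_or_swap g with ⟨h1, h2⟩ | ⟨h1, h2⟩
        · rw [h1, (hfix_c g h1 h2).1]; ring
        · rw [h1]
          simp only [eq_self_iff_true, if_true, if_neg hpm]
          rw [hswap_unique g g₁ h1 hg₁]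
          ring
      · rcases hfix_or_swap g with ⟨h1, h2⟩ | ⟨h1, h2⟩
        · rw [h2, (hfix_c g h1 h2).2]; ring
        · rw [h2]
          simp only [eq_self_iff_true, if_true, if_neg hpm]
          rw [hswap_sum g h1, hswap_unique g g₁ h1 hg₁]
          ring
    · refine ⟨fun _ => 0, continuous_const, ?_⟩
      intro g x
      push_neg at hsw
      have hfx : g • m₀ = m₀ ∧ g • p₀ = p₀ := by
        rcases hfix_or_swap g with h | h
        · exact h
        · exact absurd h.1 (hsw g)
      rcases hdich x with rfl | rfl
      · rw [(hfix_c g hfx.1 hfx.2).1]; ring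
      · rw [(hfix_c g hfx.1 hfx.2).2]; ring
  · -- main case : X perfect
    have no_iso : ∀ x : X, ¬ IsOpen ({x} : Set X) := by push_neg at hiso; exact hiso
    have hpick : ∀ O : Set X, IsOpen O → O.Nonempty → ∀ a : X, ∃ z ∈ O, z ≠ a := by
      intro O hO hne a
      by_contra h
      push_neg at h
      have hOa : O = {a} := Set.eq_singleton_iff_nonempty_unique_mem.mpr ⟨hne, h⟩
      exact no_iso a (hOa ▸ hO)
    have key₁ := key_lemma hc hccont hDcont hequiv hzero hub no_iso hmin hσ₀
    have key₂ := key_lemma hc hccont hDcont hequiv hzero hub no_iso hmin (hyperbolic_inv hσ₀)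
    have hm₀p₀ : m₀ ≠ p₀ := hσ₀.1
    -- u is invariant
    have hu_inv : ∀ (g : Γ) (x : X), x ≠ m₀ → x ≠ p₀ → g • x ≠ m₀ → g • x ≠ p₀ →
        D (g • x) m₀ - D (g • x) p₀ = D x m₀ - D x p₀ := by
      intro g x h1 h2 h3 h4
      have e1 := key₁ g x h1 h3
      have e2 := key₂ g x h2 h4
      linarith
    -- base point
    obtain ⟨w₁, _, hw₁m⟩ := hpick Set.univ isOpen_univ ⟨m₀, trivial⟩ m₀
    obtain ⟨x₁, hx₁O, hx₁p⟩ := hpick {z : X | z ≠ m₀} isOpen_ne ⟨w₁, hw₁m⟩ p₀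
    have hx₁m : x₁ ≠ m₀ := hx₁O
    -- u is constant
    have hconst : ∀ y : X, y ≠ m₀ → y ≠ p₀ → D y m₀ - D y p₀ = D x₁ m₀ - D x₁ p₀ := by
      intro y hy1 hy2
      apply eq_of_abs_forall
      intro ε hε
      have hcy : ContinuousAt (fun z : X => D z m₀ - D z p₀) y :=
        (contAt_D_left hDcont m₀ hy1).sub (contAt_D_left hDcont p₀ hy2)
      obtain ⟨O, hOo, hyO, hOb⟩ := nbhd_abs hcy hε
      have hO'o : IsOpen (O ∩ {z : X | z ≠ m₀} ∩ {z : X | z ≠ p₀}) :=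
        (hOo.inter isOpen_ne).inter isOpen_ne
      have hyO' : y ∈ O ∩ {z : X | z ≠ m₀} ∩ {z : X | z ≠ p₀} := ⟨⟨hyO, hy1⟩, hy2⟩
      obtain ⟨w, hwOrb, hwO'⟩ := (hmin x₁).exists_mem_open hO'o ⟨y, hyO'⟩
      obtain ⟨g, hg⟩ := MulAction.mem_orbit_iff.mp hwOrb
      have hinv : D (g • x₁) m₀ - D (g • x₁) p₀ = D x₁ m₀ - D x₁ p₀ := by
        apply hu_inv g x₁ hx₁m hx₁p
        · rw [hg]; exact hwO'.1.2
        · rw [hg]; exact hwO'.2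
      rw [hg] at hinv
      have hb := hOb w hwO'.1.1
      rw [abs_sub_comm, ← hinv]
      exact hb
    set κ : ℝ := D x₁ m₀ - D x₁ p₀ with hκdef
    set φ : X → ℝ := fun x => if x = m₀ then D m₀ p₀ + κ else D x m₀ with hφdef
    have hφ1 : ∀ x : X, x ≠ m₀ → φ x = D x m₀ := by
      intro x hx; simp only [hφdef, if_neg hx]
    have hφ2 : ∀ x : X, x ≠ p₀ → φ x = D x p₀ + κ := by
      intro x hx
      by_cases hxm : x = m₀
      · rw [hφdef]
        simp only [if_pos hxm]
        rw [hxm]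
      · rw [hφ1 x hxm]
        have := hconst x hxm hx
        linarith
    have hφc : Continuous φ := by
      rw [continuous_iff_continuousAt]
      intro x
      by_cases hxm : x = m₀
      · have hca : ContinuousAt (fun z : X => D z p₀ + κ) x := by
          rw [hxm]
          exact (contAt_D_left hDcont p₀ hm₀p₀).add continuousAt_const
        apply hca.congr
        have hxp : x ≠ p₀ := by rw [hxm]; exact hm₀p₀
        filter_upwards [isOpen_ne.mem_nhds (hxp : x ∈ {z : X | z ≠ p₀})] with z hz
        exact (hφ2 z hz).symm
      · have hca : ContinuousAt (fun z : X => D z m₀) x := contAt_D_left hDcont m₀ hxm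
        apply hca.congr
        filter_upwards [isOpen_ne.mem_nhds (hxm : x ∈ {z : X | z ≠ m₀})] with z hz
        exact (hφ1 z hz).symm
    refine ⟨φ, hφc, ?_⟩
    intro g
    have hF : Continuous (fun x : X => c g x - (φ (g • x) - φ x)) :=
      (hccont g).sub ((hφc.comp (continuous_const_smul g)).sub hφc)
    have hdense : Dense {x : X | x ≠ m₀ ∧ g • x ≠ m₀} := by
      rw [dense_iff_inter_open]
      intro U hU hUne
      obtain ⟨z₁, hz₁U, hz₁⟩ := hpick U hU hUne m₀
      obtain ⟨z, hzU, hz2⟩ := hpick (U ∩ {w : X | w ≠ m₀}) (hU.inter isOpen_ne)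
        ⟨z₁, hz₁U, hz₁⟩ (g⁻¹ • m₀)
      refine ⟨z, hzU.1, hzU.2, ?_⟩
      intro h
      exact hz2 (by rw [← h, inv_smul_smul])
    have hzeroOn : ∀ x ∈ {x : X | x ≠ m₀ ∧ g • x ≠ m₀},
        c g x - (φ (g • x) - φ x) = 0 := by
      rintro x ⟨h1, h2⟩
      rw [hφ1 _ h1, hφ1 _ h2, key₁ g x h1 h2]
      ring
    have hall : ∀ x : X, c g x - (φ (g • x) - φ x) = 0 := by
      intro x
      have hcl : IsClosed {x : X | c g x - (φ (g • x) - φ x) = 0} :=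
        isClosed_eq hF continuous_const
      have hsub : closure {x : X | x ≠ m₀ ∧ g • x ≠ m₀} ⊆
          {x : X | c g x - (φ (g • x) - φ x) = 0} :=
        hcl.closure_subset_iff.mpr hzeroOn
      rw [hdense.closure_eq] at hsub
      exact hsub (Set.mem_univ x)
    intro x
    linarith [hall x]

theorem stmt14 {Γ X : Type*} [Group Γ] [TopologicalSpace X] [MeasurableSpace X]
    [MulAction Γ X]
    (hgb : IsGeneralGeometricBoundary Γ X)
    (hex : ∃ γ : Γ, ∃ m p : X, IsHyperbolic γ m p)
    (α β : Γ → X → ℝ) (A B : X → X → ℝ)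
    (hα : IsBCocycle α A) (hβ : IsBCocycle β B)
    (hℓ : ∀ γ : Γ, ∀ m p : X, IsHyperbolic γ m p → α γ p = β γ p) :
    ∃ φ : X → ℝ, Continuous φ ∧
      ∀ γ : Γ, ∀ x : X, α γ x - β γ x = φ (γ • x) - φ x := by
  haveI := hgb.compact
  haveI := hgb.t2
  haveI := hgb.contSMul
  have hc : IsCocycle (fun g (x : X) => α g x - β g x) := by
    intro γ η x
    have h1 := hα.1 γ η x
    have h2 := hβ.1 γ η x
    simp only []
    linarith
  have hccont : ∀ γ : Γ, Continuous (fun x : X => α γ x - β γ x) :=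
    fun γ => (hα.2.1 γ).sub (hβ.2.1 γ)
  have hDcont : ContinuousOn (fun q : X × X => A q.1 q.2 - B q.1 q.2)
      {q : X × X | q.1 ≠ q.2} := (hα.2.2.1).sub (hβ.2.2.1)
  have hequiv : ∀ γ : Γ, ∀ x y : X, x ≠ y →
      (A (γ • x) (γ • y) - B (γ • x) (γ • y)) - (A x y - B x y) =
        (α γ x - β γ x) + (α γ y - β γ y) := by
    intro γ x y h
    have h1 := hα.2.2.2 γ x y h
    have h2 := hβ.2.2.2 γ x y h
    linarith
  have hzero : ∀ σ : Γ, ∀ m p : X, IsHyperbolic σ m p → α σ p - β σ p = 0 :=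
    fun σ m p h => sub_eq_zero_of_eq (hℓ σ m p h)
  obtain ⟨φ, hφc, hφ⟩ := main_aux hgb.minimal hgb.unbounded hex
    (c := fun g (x : X) => α g x - β g x) (D := fun x y => A x y - B x y)
    hc hccont hDcont hequiv hzero
  exact ⟨φ, hφc, fun γ x => hφ γ x⟩
end

section
/- Let λ > 0 be a real number and let A = [[a, b], [c, d]] and B = [[a₁, b₁], [c₁, d₁]] be real 2×2 matrices with det A = 1, d ≠ 1, and b₁ ≠ 0. Suppose diag(λ, λ⁻¹) · B · diag(λ⁻¹, λ) = A · B. Then a₁(1 − a) = b·c₁, d₁(1 − d) = c·b₁, and λ² = (a − 1)/(1 − d). -/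
theorem stmt17 (l a b c d a₁ b₁ c₁ d₁ : ℝ) (hl : 0 < l)
    (hdetA : a * d - b * c = 1) (hd : d ≠ 1) (hb₁ : b₁ ≠ 0)
    (heq : !![l, 0; 0, l⁻¹] * !![a₁, b₁; c₁, d₁] * !![l⁻¹, 0; 0, l] =
      !![a, b; c, d] * !![a₁, b₁; c₁, d₁]) :
    a₁ * (1 - a) = b * c₁ ∧ d₁ * (1 - d) = c * b₁ ∧
      l ^ 2 = (a - 1) / (1 - d) := by
  have hl0 : l ≠ 0 := ne_of_gt hl
  have h00 := congrFun (congrFun heq 0) 0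
  have h01 := congrFun (congrFun heq 0) 1
  have h11 := congrFun (congrFun heq 1) 1
  simp [Matrix.mul_apply, Fin.sum_univ_two] at h00 h01 h11
  have e00 : a₁ = a * a₁ + b * c₁ := by
    field_simp at h00; linarith [h00]
  have e01 : l ^ 2 * b₁ = a * b₁ + b * d₁ := by
    have : l * b₁ * l = a * b₁ + b * d₁ := h01
    nlinarith [this]
  have e11 : d₁ = c * b₁ + d * d₁ := by
    field_simp at h11; linarith [h11]
  have h2 : d₁ * (1 - d) = c * b₁ := by linarith
  refine ⟨by linarith, h2, ?_⟩
  have hd' : 1 - d ≠ 0 := fun h => hd (by linarith)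
  rw [eq_div_iff hd']
  have key : l ^ 2 * (1 - d) * b₁ = (a - 1) * b₁ := by
    linear_combination (1 - d) * e01 + b * h2 - b₁ * hdetA
  exact mul_right_cancel₀ hb₁ key
end

section
/- Let λ > 0 be a real number and let A = [[a, b], [c, d]] and B = [[a₁, b₁], [c₁, d₁]] be real 2×2 matrices with det A = 1, det B = 1, a ≠ 1, d ≠ 1, and a₁ + b₁ = c₁ + d₁. Suppose diag(λ, λ⁻¹) · B · diag(λ⁻¹, λ) = A · B. Then b₁·c₁·(a + d − 2) = (1 − a)(1 − d) and c₁²·(a + b − 1)·(a + d − 2) = (1 − a)²·(c + d − 1). -/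
theorem stmt18 (l a b c d a₁ b₁ c₁ d₁ : ℝ) (hl : 0 < l)
    (hdetA : a * d - b * c = 1) (hdetB : a₁ * d₁ - b₁ * c₁ = 1)
    (ha : a ≠ 1) (hd : d ≠ 1) (hsum : a₁ + b₁ = c₁ + d₁)
    (heq : !![l, 0; 0, l⁻¹] * !![a₁, b₁; c₁, d₁] * !![l⁻¹, 0; 0, l] =
      !![a, b; c, d] * !![a₁, b₁; c₁, d₁]) :
    b₁ * c₁ * (a + d - 2) = (1 - a) * (1 - d) ∧
      c₁ ^ 2 * (a + b - 1) * (a + d - 2) = (1 - a) ^ 2 * (c + d - 1) := by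
  have e00 := congrFun (congrFun heq 0) 0
  have e11 := congrFun (congrFun heq 1) 1
  simp [Matrix.mul_apply, Fin.sum_univ_two] at e00 e11
  have hl0 : l ≠ 0 := ne_of_gt hl
  have E1 : a₁ = a * a₁ + b * c₁ := by field_simp at e00; linarith [e00]
  have E4 : d₁ = c * b₁ + d * d₁ := by field_simp at e11; linarith [e11]
  have g1 : b₁ * c₁ * (a + d - 2) = (1 - a) * (1 - d) := by
    linear_combination (-(1-d)*d₁)*E1 + (-(b*c₁))*E4 + (1-a)*(1-d)*hdetB + b₁*c₁*hdetA
  refine ⟨g1, ?_⟩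
  have R : (1-a)*b₁*(1-d-c) = c₁*(1-d)*(1-a-b) := by
    linear_combination (1-a)*(1-d)*hsum - (1-d)*E1 + (1-a)*E4
  have hd0 : (1 : ℝ) - d ≠ 0 := sub_ne_zero.mpr (Ne.symm hd)
  have h2 : (1-d) * (c₁ ^ 2 * (a + b - 1) * (a + d - 2)) =
      (1-d) * ((1 - a) ^ 2 * (c + d - 1)) := by
    linear_combination (c₁*(a+d-2))*R - ((1-a)*(1-d-c))*g1
  exact mul_left_cancel₀ hd0 h2
end
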